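/- arXiv:2605.03589 — 8 statements merged into one kernel-verified Lean document; each statement's English description precedes it below -/
import Mathlib

section
/- Let n \ge 2, k \ge 2, and let t_{k,1} be the smallest root of the degree-k normalized Krawtchouk polynomial Q_k(t). If \ell < t_{k,1}, then the signed measure d\mu_n^{(\ell)}(t) = -(1/\ell)(t-\ell) d\mu_n(t) is positive definite up to degree k-1: for every nonzero real polynomial p of degree at most k-1, \int_{-1}^1 p(t)^2 (t-\ell) d\mu_n(t) > 0. -/
/-!
Let `x` be the minimum of the Rayleigh quotient `∫ t p² dμ_n / ∫ p² dμ_n` over nonzero `p` of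
degree `< k`, attained (by compactness) at `p₀`. Then `∫ p² (t - x) dμ_n ≥ 0` for all such `p`, with
equality at `p₀`, so varying `p₀` shows that `(t - x) p₀` is orthogonal to all polynomials of
degree `< k`. So is `Q_k`, and `μ_n` is positive definite up to degree `n ≥ k`, hence `(t - x) p₀`
is a multiple of `Q_k`: `x` is a root of `Q_k`, so `ℓ < t_{k,1} ≤ x` and
`∫ p² (t - ℓ) dμ_n = ∫ p² (t - x) dμ_n + (x - ℓ) ∫ p² dμ_n > 0`.

For the orthogonality of `Q_k`: up to the factor `binom(n,k)`, `Q_k(t_i)` is the coefficient of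
`y^k` in `(1 + y)^i (1 - y)^(n-i)`; by Newton's forward difference formula a polynomial of degree
`< k` in `i` is a combination of the `binom(i,j)` with `j < k`, and
`∑ᵢ binom(n,i) binom(i,j) (1 + y)^i (1 - y)^(n-i) = binom(n,j) (1 + y)^j 2^(n-j)`
has degree `j < k`.
-/

noncomputable def rchoose (z : ℝ) (j : ℕ) : ℝ :=
  (∏ t ∈ Finset.range j, (z - t)) / (Nat.factorial j)

/-- Binary Krawtchouk polynomial `K_i^{(n)}(z)`. -/
noncomputable def Kr (n i : ℕ) (z : ℝ) : ℝ :=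
  ∑ j ∈ Finset.range (i + 1), (-1 : ℝ) ^ j * rchoose z j * rchoose ((n : ℝ) - z) (i - j)

/-- Normalized Krawtchouk polynomial `Q_i(t) = K_i^{(n)}(n(1-t)/2)/binom(n,i)`. -/
noncomputable def Qn (n i : ℕ) (t : ℝ) : ℝ :=
  Kr n i ((n : ℝ) * (1 - t) / 2) / (n.choose i : ℝ)

/-- The point `t_m = -1 + 2m/n`. -/
noncomputable def tpt (n m : ℕ) : ℝ := -1 + 2 * (m : ℝ) / (n : ℝ)

/-- Integral of `f` with respect to the measure `μ_n = 2^{-n} ∑ binom(n,i) δ_{t_i}`. -/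
noncomputable def muInt (n : ℕ) (f : ℝ → ℝ) : ℝ :=
  ((2 : ℝ) ^ n)⁻¹ * ∑ i ∈ Finset.range (n + 1), (n.choose i : ℝ) * f (tpt n i)

open Polynomial Finset

theorem exists_forall_le_of_smul_invariant {E : Type*} [NormedAddCommGroup E] [NormedSpace ℝ E]
    [FiniteDimensional ℝ E] [Nontrivial E] {φ : E → ℝ} (hφ : ContinuousOn φ {0}ᶜ)
    (hφ_smul : ∀ (a : ℝ) (c : E), a ≠ 0 → φ (a • c) = φ c) :
    ∃ c₀ ≠ 0, ∀ c ≠ 0, φ c₀ ≤ φ c := by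
  obtain ⟨c₀, hc₀, hmin⟩ := (isCompact_sphere (0 : E) 1).exists_isMinOn
    (NormedSpace.sphere_nonempty.2 zero_le_one)
    (hφ.mono fun c hc => Metric.ne_of_mem_sphere hc one_ne_zero)
  refine ⟨c₀, Metric.ne_of_mem_sphere hc₀ one_ne_zero, fun c hc => ?_⟩
  have hc' : ‖c‖ ≠ 0 := norm_ne_zero_iff.2 hc
  have := hmin (a := ‖c‖⁻¹ • c) (by simp [norm_smul, hc'])
  rwa [Set.mem_ofPred_eq, hφ_smul _ _ (inv_ne_zero hc')] at this

theorem natDegree_lt_of_mem_degreeLT {R : Type*} [Semiring R] {p : R[X]} {k : ℕ} (hk : 0 < k)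
    (hp : p ∈ degreeLT R k) : p.natDegree < k := by
  rcases eq_or_ne p 0 with rfl | hp0
  · simpa using hk
  · exact (natDegree_lt_iff_degree_lt hp0).2 (mem_degreeLT.1 hp)

theorem mem_degreeLT_of_natDegree_le_of_coeff_eq_zero {R : Type*} [Semiring R] {p : R[X]} {k : ℕ}
    (hp : p.natDegree ≤ k) (hpk : p.coeff k = 0) : p ∈ degreeLT R k := by
  rw [mem_degreeLT, degree_lt_iff_coeff_zero]
  intro m hm
  obtain rfl | hm := (Nat.cast_le.1 hm).eq_or_lt
  · exact hpk
  · exact coeff_eq_zero_of_natDegree_lt (hp.trans_lt hm)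

theorem coeff_one_sub_X_pow (m j : ℕ) :
    ((1 - X : ℝ[X]) ^ m).coeff j = (-1) ^ j * m.choose j := by
  rw [show (1 - X : ℝ[X]) = C (-1) * (X + C (-1)) by simp; ring, mul_pow, ← C_pow, coeff_C_mul,
    coeff_X_add_C_pow]
  rcases le_or_gt j m with hjm | hjm
  · rw [← mul_assoc, ← pow_add, show m + (m - j) = j + 2 * (m - j) by omega, pow_add, pow_mul]
    norm_num
  · simp [Nat.choose_eq_zero_of_lt hjm]

theorem sum_choose_mul_choose_mul_pow {R : Type*} [CommSemiring R] (a b : R) (n j : ℕ) :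
    ∑ i ∈ range (n + 1), (n.choose i * i.choose j : R) * a ^ i * b ^ (n - i)
      = n.choose j * a ^ j * (a + b) ^ (n - j) := by
  rcases lt_or_ge n j with hnj | hjn
  · rw [Nat.choose_eq_zero_of_lt hnj, Nat.cast_zero, zero_mul, zero_mul]
    refine sum_eq_zero fun i hi => ?_
    rw [Nat.choose_eq_zero_of_lt (by grind : i < j)]
    simp
  rw [← sum_range_add_sum_Ico _ (by omega : j ≤ n + 1),
    sum_eq_zero fun i hi => by rw [Nat.choose_eq_zero_of_lt (mem_range.1 hi)]; simp, zero_add,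
    sum_Ico_eq_sum_range, show n + 1 - j = n - j + 1 by omega, add_pow, mul_sum]
  refine sum_congr rfl fun r hr => ?_
  have hr : r ≤ n - j := Nat.lt_succ_iff.1 (mem_range.1 hr)
  have hchoose := Nat.choose_mul (n := n) (k := j + r) (s := j) (by omega)
  rw [Nat.add_sub_cancel_left] at hchoose
  rw [← Nat.cast_mul, hchoose, show n - (j + r) = n - j - r by omega]
  push_cast
  ring

theorem eval_natCast_eq_sum_choose {R : Type*} [CommRing R] {r : R[X]} {k : ℕ}
    (hr : r.natDegree < k) (i : ℕ) :
    r.eval (i : R) = ∑ j ∈ range k, (i.choose j : R) * (fwdDiff 1)^[j] r.eval 0 := by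
  have hnewton := shift_eq_sum_fwdDiff_iter (1 : R) r.eval i 0
  rw [zero_add, nsmul_one] at hnewton
  simp only [hnewton, nsmul_eq_mul]
  calc _ = ∑ j ∈ range (max (i + 1) k), (i.choose j : R) * (fwdDiff 1)^[j] r.eval 0 :=
        sum_subset (range_subset_range.2 (le_max_left _ _)) fun j _ hj => by
          rw [Nat.choose_eq_zero_of_lt (by simpa using hj), Nat.cast_zero, zero_mul]
    _ = _ := (sum_subset (range_subset_range.2 (le_max_right _ _)) fun j _ hj => by
          rw [fwdDiff_iter_eq_zero_of_degree_lt (hr.trans_le (by simpa using hj)), Pi.zero_apply,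
            mul_zero]).symm

section MomentFunctional
variable (L : ℝ[X] →ₗ[ℝ] ℝ) {k : ℕ}

theorem continuous_moment_sq_mul (g : ℝ[X]) :
    Continuous fun c : Fin k → ℝ => L (((degreeLTEquiv ℝ k).symm c : ℝ[X]) ^ 2 * g) := by
  have h (c : Fin k → ℝ) : L (((degreeLTEquiv ℝ k).symm c : ℝ[X]) ^ 2 * g) =
      ∑ i, ∑ j, c i * c j * L (X ^ (i : ℕ) * X ^ (j : ℕ) * g) := by
    change L ((∑ i : Fin k, monomial i (c i)) ^ 2 * g) = _
    simp only [sq, sum_mul, mul_sum, map_sum, ← C_mul_X_pow_eq_monomial]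
    refine sum_congr rfl fun i _ => sum_congr rfl fun j _ => ?_
    rw [← smul_eq_mul (c i * c j), ← map_smul, smul_eq_C_mul, C_mul]
    ring_nf
  simp only [h]
  fun_prop

theorem moment_sq_mul_X_sub_C (p : ℝ[X]) (x : ℝ) :
    L (p ^ 2 * (X - C x)) = L (p ^ 2 * X) - x * L (p ^ 2) := by
  rw [mul_sub, map_sub, mul_comm _ (C x), ← smul_eq_C_mul, map_smul, smul_eq_mul]

theorem exists_moment_sq_mul_X_sub_C_nonneg (hk : 0 < k)
    (hpos : ∀ p ∈ degreeLT ℝ k, p ≠ 0 → 0 < L (p ^ 2)) :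
    ∃ x : ℝ, ∃ p₀ ∈ degreeLT ℝ k, p₀ ≠ 0 ∧ L (p₀ ^ 2 * (X - C x)) = 0 ∧
      ∀ p ∈ degreeLT ℝ k, 0 ≤ L (p ^ 2 * (X - C x)) := by
  have : NeZero k := ⟨hk.ne'⟩
  set e := degreeLTEquiv ℝ k
  have hP0 {c : Fin k → ℝ} (hc : c ≠ 0) : (e.symm c : ℝ[X]) ≠ 0 := by
    simpa [Submodule.coe_eq_zero] using hc
  have hN {c : Fin k → ℝ} (hc : c ≠ 0) : 0 < L ((e.symm c : ℝ[X]) ^ 2) :=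
    hpos _ (Submodule.coe_mem _) (hP0 hc)
  set φ : (Fin k → ℝ) → ℝ := fun c => L ((e.symm c : ℝ[X]) ^ 2 * X) / L ((e.symm c : ℝ[X]) ^ 2)
  have hφ_cont : ContinuousOn φ {0}ᶜ :=
    (continuous_moment_sq_mul L X).continuousOn.div
      (by simpa using (continuous_moment_sq_mul L (k := k) 1).continuousOn)
      fun c hc => (hN hc).ne'
  have hφ_smul (a : ℝ) (c : Fin k → ℝ) (ha : a ≠ 0) : φ (a • c) = φ c := by
    simp only [φ, map_smul, Submodule.coe_smul, _root_.smul_pow, smul_mul_assoc, smul_eq_mul]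
    exact mul_div_mul_left _ _ (pow_ne_zero 2 ha)
  obtain ⟨c₀, hc₀, hmin⟩ := exists_forall_le_of_smul_invariant hφ_cont hφ_smul
  refine ⟨φ c₀, e.symm c₀, Submodule.coe_mem _, hP0 hc₀, ?_, fun p hp => ?_⟩
  · rw [moment_sq_mul_X_sub_C, div_mul_cancel₀ _ (hN hc₀).ne', sub_self]
  · obtain rfl | hp0 := eq_or_ne p 0
    · simp
    have hc : e ⟨p, hp⟩ ≠ 0 := by simpa using hp0
    have := hmin _ hc
    simp only [φ, LinearEquiv.symm_apply_apply] at this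
    rw [le_div_iff₀ (hpos p hp hp0)] at this
    rw [moment_sq_mul_X_sub_C]
    linarith

theorem moment_mul_mul_eq_zero_of_sq_nonneg {V : Submodule ℝ ℝ[X]} {g p₀ q : ℝ[X]}
    (hV : ∀ p ∈ V, 0 ≤ L (p ^ 2 * g)) (hp₀ : p₀ ∈ V) (h₀ : L (p₀ ^ 2 * g) = 0) (hq : q ∈ V) :
    L (p₀ * q * g) = 0 := by
  have hquad (x : ℝ) : 0 ≤ L (q ^ 2 * g) * (x * x) + 2 * L (p₀ * q * g) * x + 0 := by
    have hexp : (p₀ + x • q) ^ 2 * g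
        = p₀ ^ 2 * g + (2 * x) • (p₀ * q * g) + (x * x) • (q ^ 2 * g) := by
      simp only [smul_eq_C_mul, C_mul, C_ofNat]
      ring
    have := hV _ (V.add_mem hp₀ (V.smul_mem x hq))
    rw [hexp, map_add, map_add, map_smul, map_smul, h₀, smul_eq_mul, smul_eq_mul] at this
    linarith
  have := discrim_le_zero hquad
  rw [discrim] at this
  nlinarith

theorem eq_C_mul_of_forall_moment_mul_eq_zero (hpos : ∀ p ∈ degreeLT ℝ k, p ≠ 0 → 0 < L (p ^ 2))
    {Q r : ℝ[X]} (hQ : Q.natDegree ≤ k) (hQk : Q.coeff k ≠ 0)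
    (hQ_orth : ∀ q ∈ degreeLT ℝ k, L (Q * q) = 0) (hr : r.natDegree ≤ k)
    (hr_orth : ∀ q ∈ degreeLT ℝ k, L (r * q) = 0) :
    r = C (r.coeff k / Q.coeff k) * Q := by
  set s := r - C (r.coeff k / Q.coeff k) * Q
  have hs : s ∈ degreeLT ℝ k :=
    mem_degreeLT_of_natDegree_le_of_coeff_eq_zero
      ((natDegree_sub_le_of_le hr ((natDegree_C_mul_le _ _).trans hQ)).trans (max_self k).le)
      (by simp [s, hQk])
  have hs2 : L (s ^ 2) = 0 := by
    rw [sq, show s * s = r * s - C (r.coeff k / Q.coeff k) * (Q * s) by ring, ← smul_eq_C_mul,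
      map_sub, map_smul, hr_orth s hs, hQ_orth s hs, smul_zero, sub_zero]
  by_contra h
  exact (hpos s hs (sub_ne_zero.2 h)).ne' hs2

theorem moment_sq_mul_X_sub_C_pos (hpos : ∀ p ∈ degreeLT ℝ k, p ≠ 0 → 0 < L (p ^ 2))
    {Q : ℝ[X]} (hQ0 : Q ≠ 0) (hQ : Q.natDegree ≤ k) (hQ_orth : ∀ q ∈ degreeLT ℝ k, L (Q * q) = 0)
    {ℓ : ℝ} (hℓ : ∀ x, Q.IsRoot x → ℓ < x) {p : ℝ[X]} (hp : p ∈ degreeLT ℝ k) (hp0 : p ≠ 0) :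
    0 < L (p ^ 2 * (X - C ℓ)) := by
  have hk : 0 < k := Nat.pos_of_ne_zero fun hk => hp0 (by subst hk; simpa [mem_degreeLT] using hp)
  obtain ⟨x, p₀, hp₀, hp₀0, h₀, hnonneg⟩ := exists_moment_sq_mul_X_sub_C_nonneg L hk hpos
  have hQk : Q.coeff k ≠ 0 := by
    intro hQk
    have hQmem : Q ∈ degreeLT ℝ k := mem_degreeLT_of_natDegree_le_of_coeff_eq_zero hQ hQk
    exact (hpos Q hQmem hQ0).ne' (by rw [sq]; exact hQ_orth Q hQmem)
  have hr := eq_C_mul_of_forall_moment_mul_eq_zero L hpos hQ hQk hQ_orth (r := (X - C x) * p₀)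
    (natDegree_mul_le.trans (by
      rw [natDegree_X_sub_C]; have := natDegree_lt_of_mem_degreeLT hk hp₀; omega))
    fun q hq => by
      rw [show (X - C x) * p₀ * q = p₀ * q * (X - C x) by ring]
      exact moment_mul_mul_eq_zero_of_sq_nonneg L hnonneg hp₀ h₀ hq
  have hroot : Q.IsRoot x := by
    set c := ((X - C x) * p₀).coeff k / Q.coeff k
    have hc : c ≠ 0 := by
      rintro hc
      rw [hc, C_0, zero_mul] at hr
      exact mul_ne_zero (X_sub_C_ne_zero x) hp₀0 hr
    simpa [hc] using (congrArg (eval x) hr).symm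
  have hNp := hpos p hp hp0
  have := hnonneg p hp
  rw [moment_sq_mul_X_sub_C] at this ⊢
  nlinarith [hℓ x hroot]

end MomentFunctional

theorem rchoose_natCast (m j : ℕ) : rchoose m j = m.choose j := by
  rw [rchoose, ← descPochhammer_eval_eq_prod_range, descPochhammer_eval_eq_descFactorial,
    Nat.descFactorial_eq_factorial_mul_choose, Nat.cast_mul, mul_div_cancel_left₀]
  positivity

theorem Kr_natCast (n k m : ℕ) (hm : m ≤ n) :
    Kr n k m = ((1 - X) ^ m * (1 + X) ^ (n - m) : ℝ[X]).coeff k := by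
  rw [coeff_mul, Nat.sum_antidiagonal_eq_sum_range_succ
    (fun a b => ((1 - X : ℝ[X]) ^ m).coeff a * ((1 + X : ℝ[X]) ^ (n - m)).coeff b), Kr]
  refine sum_congr rfl fun j _ => ?_
  rw [coeff_one_sub_X_pow, coeff_one_add_X_pow, rchoose_natCast,
    show (n : ℝ) - m = (n - m : ℕ) by rw [Nat.cast_sub hm], rchoose_natCast]

theorem Qn_one {n k : ℕ} (hkn : k ≤ n) : Qn n k 1 = 1 := by
  rw [Qn, show (n : ℝ) * (1 - 1) / 2 = (0 : ℕ) by simp, Kr_natCast n k 0 (Nat.zero_le n), pow_zero,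
    one_mul, Nat.sub_zero, coeff_one_add_X_pow, div_self]
  exact_mod_cast (Nat.choose_pos hkn).ne'

theorem Qn_tpt {n : ℕ} (hn : n ≠ 0) (k : ℕ) {i : ℕ} (hi : i ≤ n) :
    Qn n k (tpt n i) = ((1 + X) ^ i * (1 - X) ^ (n - i) : ℝ[X]).coeff k / n.choose k := by
  have harg : (n : ℝ) * (1 - tpt n i) / 2 = (n - i : ℕ) := by
    rw [tpt, Nat.cast_sub hi]
    field_simp
    ring
  rw [Qn, harg, Kr_natCast n k _ (Nat.sub_le n i), Nat.sub_sub_self hi, mul_comm]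

theorem sum_choose_mul_coeff_mul_eval_eq_zero (n : ℕ) {k : ℕ} {r : ℝ[X]} (hr : r.natDegree < k) :
    ∑ i ∈ range (n + 1),
      n.choose i * ((1 + X) ^ i * (1 - X) ^ (n - i) : ℝ[X]).coeff k * r.eval (i : ℝ) = 0 := by
  have hbasis (j : ℕ) (hj : j < k) :
      ∑ i ∈ range (n + 1),
        n.choose i * i.choose j * ((1 + X) ^ i * (1 - X) ^ (n - i) : ℝ[X]).coeff k = 0 := by
    have := congrArg (coeff · k) (sum_choose_mul_choose_mul_pow (1 + X : ℝ[X]) (1 - X) n j)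
    rw [show (1 + X + (1 - X) : ℝ[X]) = C 2 by rw [C_ofNat]; ring, ← C_pow, coeff_mul_C,
      coeff_natCast_mul, coeff_one_add_X_pow, Nat.choose_eq_zero_of_lt hj] at this
    simpa [finsetSum_coeff, ← Nat.cast_mul, mul_assoc, coeff_natCast_mul] using this
  simp_rw [eval_natCast_eq_sum_choose hr, mul_sum]
  rw [sum_comm]
  refine sum_eq_zero fun j hj => ?_
  calc _ = (fwdDiff 1)^[j] r.eval 0 * ∑ i ∈ range (n + 1),
        n.choose i * i.choose j * ((1 + X) ^ i * (1 - X) ^ (n - i) : ℝ[X]).coeff k := by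
          rw [mul_sum]; exact sum_congr rfl fun i _ => by ring
    _ = 0 := by rw [hbasis j (mem_range.1 hj), mul_zero]

theorem muInt_Qn_mul_eval_eq_zero {n : ℕ} (hn : n ≠ 0) (k : ℕ) {q : ℝ[X]} (hq : q.natDegree < k) :
    muInt n (fun t => Qn n k t * q.eval t) = 0 := by
  set r := q.comp (C (2 / n : ℝ) * X + C (-1))
  have hr : r.natDegree < k :=
    calc r.natDegree ≤ q.natDegree * (C (2 / n : ℝ) * X + C (-1)).natDegree := natDegree_comp_le
      _ ≤ q.natDegree * 1 := Nat.mul_le_mul_left _ natDegree_linear_le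
      _ < k := by rwa [mul_one]
  have hr_eval (i : ℕ) : r.eval (i : ℝ) = q.eval (tpt n i) := by
    simp only [r, eval_comp, eval_add, eval_mul, eval_C, eval_X, tpt]
    ring_nf
  refine mul_eq_zero_of_right _ ?_
  calc _ = (∑ i ∈ range (n + 1),
        n.choose i * ((1 + X) ^ i * (1 - X) ^ (n - i) : ℝ[X]).coeff k * r.eval (i : ℝ)) /
          n.choose k := by
        rw [sum_div]
        refine sum_congr rfl fun i hi => ?_
        dsimp only
        rw [Qn_tpt hn k (Nat.lt_succ_iff.1 (mem_range.1 hi)), hr_eval]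
        ring
    _ = 0 := by rw [sum_choose_mul_coeff_mul_eval_eq_zero n hr, zero_div]

noncomputable def rchoosePoly (j : ℕ) : ℝ[X] := C ((Nat.factorial j : ℝ)⁻¹) * descPochhammer ℝ j

theorem eval_rchoosePoly (j : ℕ) (z : ℝ) : (rchoosePoly j).eval z = rchoose z j := by
  rw [rchoosePoly, eval_mul, eval_C, descPochhammer_eval_eq_prod_range, rchoose, inv_mul_eq_div]

theorem natDegree_rchoosePoly_comp_le (j : ℕ) (a b : ℝ) :
    ((rchoosePoly j).comp (C a * X + C b)).natDegree ≤ j :=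
  calc _ ≤ (rchoosePoly j).natDegree * (C a * X + C b).natDegree := natDegree_comp_le
    _ ≤ j * 1 := Nat.mul_le_mul ((natDegree_C_mul_le _ _).trans (descPochhammer_natDegree ℝ j).le)
        natDegree_linear_le
    _ = j := mul_one j

/-- The arguments of `rchoose` in `Qn n k t` are `z = n (1 - t) / 2` and `n - z = n (1 + t) / 2`. -/
noncomputable def QnPoly (n k : ℕ) : ℝ[X] :=
  C ((n.choose k : ℝ)⁻¹) * ∑ j ∈ range (k + 1), C ((-1) ^ j) *
    (rchoosePoly j).comp (C (-(n / 2 : ℝ)) * X + C (n / 2 : ℝ)) *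
    (rchoosePoly (k - j)).comp (C (n / 2 : ℝ) * X + C (n / 2 : ℝ))

theorem eval_QnPoly (n k : ℕ) (t : ℝ) : (QnPoly n k).eval t = Qn n k t := by
  simp only [QnPoly, Qn, Kr, eval_mul, eval_C, eval_finsetSum, eval_comp, eval_add, eval_X,
    eval_rchoosePoly]
  rw [inv_mul_eq_div, show -(n / 2 : ℝ) * t + n / 2 = n * (1 - t) / 2 by ring,
    show (n / 2 : ℝ) * t + n / 2 = n - n * (1 - t) / 2 by ring]

theorem natDegree_QnPoly_le (n k : ℕ) : (QnPoly n k).natDegree ≤ k := by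
  refine (natDegree_C_mul_le _ _).trans (natDegree_sum_le_of_forall_le _ _ fun j hj => ?_)
  refine natDegree_mul_le.trans ?_
  have h₁ := (natDegree_C_mul_le ((-1 : ℝ) ^ j) _).trans
    (natDegree_rchoosePoly_comp_le j (-(n / 2 : ℝ)) (n / 2 : ℝ))
  have h₂ := natDegree_rchoosePoly_comp_le (k - j) (n / 2 : ℝ) (n / 2 : ℝ)
  have := mem_range.1 hj
  omega

theorem QnPoly_ne_zero {n k : ℕ} (hkn : k ≤ n) : QnPoly n k ≠ 0 := fun h => by
  simpa [h] using (eval_QnPoly n k 1).trans (Qn_one hkn)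

theorem tpt_injOn (n : ℕ) : Set.InjOn (tpt n) (range (n + 1)) := by
  intro i hi j hj h
  rcases eq_or_ne n 0 with rfl | hn
  · simp only [coe_range, Set.mem_Iio] at hi hj
    omega
  · have : (i : ℝ) = j := by
      simp only [tpt] at h
      field_simp at h
      linarith
    exact_mod_cast this

theorem muInt_sq_pos {n : ℕ} {p : ℝ[X]} (hp : p ≠ 0) (hdeg : p.natDegree ≤ n) :
    0 < muInt n (fun t => p.eval t ^ 2) := by
  refine mul_pos (by positivity) (sum_pos' (fun i _ => by positivity) ?_)
  by_contra! h
  refine hp (eq_zero_of_natDegree_lt_card_of_eval_eq_zero' p ((range (n + 1)).image (tpt n)) ?_ ?_)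
  · simp only [mem_image]
    rintro _ ⟨i, hi, rfl⟩
    have hc : (0 : ℝ) < n.choose i := by
      exact_mod_cast Nat.choose_pos (by simpa [Nat.lt_succ_iff] using hi)
    have := h i hi
    exact pow_eq_zero_iff two_ne_zero |>.1 (le_antisymm (by nlinarith) (sq_nonneg _))
  · rw [card_image_of_injOn (tpt_injOn n), card_range]
    omega

noncomputable def muFunctional (n : ℕ) : ℝ[X] →ₗ[ℝ] ℝ where
  toFun p := muInt n p.eval
  map_add' p q := by simp only [muInt, eval_add, mul_add, sum_add_distrib]
  map_smul' c p := by
    simp only [muInt, eval_smul, smul_eq_mul, RingHom.id_apply, mul_sum]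
    exact sum_congr rfl fun i _ => by ring

theorem muFunctional_apply (n : ℕ) (p : ℝ[X]) : muFunctional n p = muInt n p.eval := rfl

theorem signed_measure_positive_definite_general (n k : ℕ) (hk : 2 ≤ k) (hkn : k ≤ n)
    (t1 : ℝ) (hleast : ∀ t : ℝ, Qn n k t = 0 → t1 ≤ t)
    (ℓ : ℝ) (hℓ : ℓ < t1)
    (p : Polynomial ℝ) (hp : p ≠ 0) (hdeg : p.natDegree ≤ k - 1) :
    0 < muInt n (fun t => p.eval t ^ 2 * (t - ℓ)) := by
  have hk₀ : 0 < k := by omega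
  have hn : n ≠ 0 := by omega
  have hpos (q : ℝ[X]) (hq : q ∈ degreeLT ℝ k) (hq0 : q ≠ 0) : 0 < muFunctional n (q ^ 2) := by
    simpa [muFunctional_apply] using
      muInt_sq_pos hq0 ((natDegree_lt_of_mem_degreeLT hk₀ hq).le.trans hkn)
  have horth (q : ℝ[X]) (hq : q ∈ degreeLT ℝ k) : muFunctional n (QnPoly n k * q) = 0 := by
    simpa [muFunctional_apply, eval_QnPoly] using
      muInt_Qn_mul_eval_eq_zero hn k (natDegree_lt_of_mem_degreeLT hk₀ hq)
  have hroots (x : ℝ) (hx : (QnPoly n k).IsRoot x) : ℓ < x :=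
    hℓ.trans_le (hleast x (by rwa [IsRoot, eval_QnPoly] at hx))
  have hp_mem : p ∈ degreeLT ℝ k :=
    mem_degreeLT.2 (degree_le_natDegree.trans_lt (Nat.cast_lt.2 (by omega)))
  simpa [muFunctional_apply] using moment_sq_mul_X_sub_C_pos (muFunctional n) hpos
    (QnPoly_ne_zero hkn) (natDegree_QnPoly_le n k) horth hroots hp_mem hp

/-- If `ℓ` is smaller than the least root of `Q_k`, the signed measure
`(t-ℓ) dμ_n(t)` (normalized by `-1/ℓ`) is positive definite up to degree `k-1`. -/
theorem signed_measure_positive_definite (n k : ℕ) (hn : 2 ≤ n) (hk : 2 ≤ k) (hkn : k ≤ n)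
    (t1 : ℝ) (hroot : Qn n k t1 = 0) (hleast : ∀ t : ℝ, Qn n k t = 0 → t1 ≤ t)
    (ℓ : ℝ) (hℓ : ℓ < t1)
    (p : Polynomial ℝ) (hp : p ≠ 0) (hdeg : p.natDegree ≤ k - 1) :
    0 < muInt n (fun t => p.eval t ^ 2 * (t - ℓ)) :=
  signed_measure_positive_definite_general n k hk hkn t1 hleast ℓ hℓ p hp hdeg
end

section
/- For n \ge 2 and \ell with n\ell^2 \ne 1, the polynomial Q_2^{0,\ell}(t) = (n^2(n\ell^2-1)t^2 + 2n\ell(n-1)t - n^2\ell^2 + 3n - 2) / ((n-1)((n\ell+1)^2 - (n-1))) satisfies \int_{-1}^1 Q_2^{0,\ell}(t)\,(t-\ell)\,d\mu_n(t) = 0 and \int_{-1}^1 t\, Q_2^{0,\ell}(t)\,(t-\ell)\,d\mu_n(t) = 0, and Q_2^{0,\ell}(1) = 1. -/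
/-!
`μ_n` is the law of the mean of `n` independent uniform signs, and `t_i = (2i - n)/n`. The sums
`∑ binom(n,i) (2i - n)^k` satisfy a Pascal recursion in `n`, which gives the moments
`1, 0, 1/n, 0, (3n - 2)/n³` of `μ_n` up to order four (odd ones vanish by the symmetry
`i ↦ n - i`). Both integrands are quartics in `t`, so each integral is an explicit linear
combination of these moments, and the coefficients of `Q_2^{0,ℓ}` are chosen to make it vanish.
-/

open Finset

theorem sum_range_choose_succ_smul {M : Type*} [AddCommMonoid M] (n : ℕ) (g : ℕ → M) :
    ∑ i ∈ range (n + 2), (n + 1).choose i • g i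
      = ∑ i ∈ range (n + 1), n.choose i • (g i + g (i + 1)) := by
  have hlower := sum_range_succ' (fun i => n.choose i • g i) (n + 1)
  rw [sum_range_succ, Nat.choose_succ_self, zero_smul, add_zero, Nat.choose_zero_right,
    one_smul] at hlower
  rw [sum_range_succ', Nat.choose_zero_right, one_smul]
  simp only [Nat.choose_succ_succ, add_smul, sum_add_distrib, smul_add]
  rw [add_assoc, ← hlower, add_comm]

noncomputable def centredBinomPowSum (n k : ℕ) : ℝ :=
  ∑ i ∈ range (n + 1), (n.choose i : ℝ) * (2 * i - n) ^ k

theorem centredBinomPowSum_zero_right (n : ℕ) : centredBinomPowSum n 0 = 2 ^ n := by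
  simp only [centredBinomPowSum, pow_zero, mul_one]
  exact_mod_cast Nat.sum_range_choose n

theorem centredBinomPowSum_of_odd (n : ℕ) {k : ℕ} (hk : Odd k) : centredBinomPowSum n k = 0 := by
  have hflip : centredBinomPowSum n k = -centredBinomPowSum n k := by
    unfold centredBinomPowSum
    conv_lhs => rw [← sum_range_reflect]
    rw [← sum_neg_distrib]
    refine sum_congr rfl fun i hi => ?_
    have hin : i ≤ n := Nat.lt_succ_iff.mp (mem_range.mp hi)
    rw [Nat.add_sub_cancel, Nat.choose_symm hin, Nat.cast_sub hin,
      show 2 * ((n : ℝ) - i) - n = -(2 * i - n) by ring, hk.neg_pow, mul_neg]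
  linarith

/-- Pascal's rule turns the sum over `n + 1` into one over `n` of `(x - 1) ^ k + (x + 1) ^ k`
at `x = 2 i - n`; only even powers of `x` survive. -/
theorem centredBinomPowSum_succ_left (n k : ℕ) :
    centredBinomPowSum (n + 1) k
      = ∑ j ∈ range (k + 1), (k.choose j : ℝ) * (1 + (-1) ^ (k - j)) * centredBinomPowSum n j := by
  have hpascal := sum_range_choose_succ_smul n (fun i => (2 * (i : ℝ) - (n + 1 : ℕ)) ^ k)
  simp only [nsmul_eq_mul] at hpascal
  rw [centredBinomPowSum, hpascal]
  have hshift : ∀ i : ℕ, (2 * (i : ℝ) - (n + 1 : ℕ)) ^ k + (2 * ((i + 1 : ℕ) : ℝ) - (n + 1 : ℕ)) ^ k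
      = ∑ j ∈ range (k + 1), (k.choose j : ℝ) * (1 + (-1) ^ (k - j)) * (2 * i - n) ^ j := by
    intro i
    rw [show (2 * (i : ℝ) - (n + 1 : ℕ)) = (2 * i - n) + (-1) by push_cast; ring,
      show (2 * ((i + 1 : ℕ) : ℝ) - (n + 1 : ℕ)) = (2 * i - n) + 1 by push_cast; ring,
      add_pow, add_pow, ← sum_add_distrib]
    refine sum_congr rfl fun j _ => ?_
    ring
  simp only [hshift, mul_sum, centredBinomPowSum]
  rw [sum_comm]
  refine sum_congr rfl fun j _ => sum_congr rfl fun i _ => ?_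
  ring

theorem centredBinomPowSum_two (n : ℕ) : centredBinomPowSum n 2 = n * 2 ^ n := by
  induction n with
  | zero => simp [centredBinomPowSum]
  | succ n ih =>
    rw [centredBinomPowSum_succ_left]
    simp only [sum_range_succ, sum_range_zero, ih, centredBinomPowSum_zero_right]
    norm_num
    ring

theorem centredBinomPowSum_four (n : ℕ) :
    centredBinomPowSum n 4 = (3 * n ^ 2 - 2 * n) * 2 ^ n := by
  induction n with
  | zero => simp [centredBinomPowSum]
  | succ n ih =>
    rw [centredBinomPowSum_succ_left]
    simp only [sum_range_succ, sum_range_zero, ih, centredBinomPowSum_zero_right,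
      centredBinomPowSum_two]
    norm_num [Nat.choose]
    ring

theorem sum_choose_mul_tpt_pow {n : ℕ} (hn : n ≠ 0) (k : ℕ) :
    ∑ i ∈ range (n + 1), (n.choose i : ℝ) * tpt n i ^ k = centredBinomPowSum n k / n ^ k := by
  have htpt : ∀ i, tpt n i = (2 * i - n) / n := fun i => by
    unfold tpt; field_simp; ring
  simp only [htpt, div_pow, centredBinomPowSum, sum_div, mul_div_assoc]

theorem muInt_quartic {n : ℕ} (hn : n ≠ 0) (a b c d e : ℝ) :
    muInt n (fun t => a * t ^ 4 + b * t ^ 3 + c * t ^ 2 + d * t + e)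
      = a * (3 * n - 2) / n ^ 3 + c / n + e := by
  have hmoment := sum_choose_mul_tpt_pow hn
  have hcollect : ∑ i ∈ range (n + 1), (n.choose i : ℝ) * (a * tpt n i ^ 4 + b * tpt n i ^ 3
      + c * tpt n i ^ 2 + d * tpt n i + e)
      = a * ∑ i ∈ range (n + 1), (n.choose i : ℝ) * tpt n i ^ 4
        + b * ∑ i ∈ range (n + 1), (n.choose i : ℝ) * tpt n i ^ 3
        + c * ∑ i ∈ range (n + 1), (n.choose i : ℝ) * tpt n i ^ 2
        + d * ∑ i ∈ range (n + 1), (n.choose i : ℝ) * tpt n i ^ 1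
        + e * ∑ i ∈ range (n + 1), (n.choose i : ℝ) * tpt n i ^ 0 := by
    simp only [mul_sum, ← sum_add_distrib]
    refine sum_congr rfl fun i _ => by ring
  rw [muInt, hcollect, hmoment, hmoment, hmoment, hmoment, hmoment, centredBinomPowSum_four,
    centredBinomPowSum_two, centredBinomPowSum_zero_right,
    centredBinomPowSum_of_odd n (by decide : Odd 3), centredBinomPowSum_of_odd n odd_one]
  field_simp
  ring

theorem Q2_0ell_properties_general (n : ℕ) (hn : 2 ≤ n) (ℓ : ℝ)
    (hden : ((n : ℝ) - 1) * (((n : ℝ) * ℓ + 1) ^ 2 - ((n : ℝ) - 1)) ≠ 0)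
    (Q2 : ℝ → ℝ)
    (hQ2 : ∀ t, Q2 t = ((n : ℝ) ^ 2 * ((n : ℝ) * ℓ ^ 2 - 1) * t ^ 2
        + 2 * (n : ℝ) * ℓ * ((n : ℝ) - 1) * t - (n : ℝ) ^ 2 * ℓ ^ 2 + 3 * (n : ℝ) - 2)
      / (((n : ℝ) - 1) * (((n : ℝ) * ℓ + 1) ^ 2 - ((n : ℝ) - 1)))) :
    muInt n (fun t => Q2 t * (t - ℓ)) = 0 ∧
      muInt n (fun t => t * Q2 t * (t - ℓ)) = 0 ∧ Q2 1 = 1 := by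
  have hn0 : n ≠ 0 := by omega
  set D := ((n : ℝ) - 1) * (((n : ℝ) * ℓ + 1) ^ 2 - ((n : ℝ) - 1))
  set a := (n : ℝ) ^ 2 * ((n : ℝ) * ℓ ^ 2 - 1)
  set b := 2 * (n : ℝ) * ℓ * ((n : ℝ) - 1)
  set c := -(n : ℝ) ^ 2 * ℓ ^ 2 + 3 * n - 2
  have hQ2' : ∀ t, Q2 t = (a * t ^ 2 + b * t + c) / D := fun t => by rw [hQ2]; ring
  have horth₀ : (fun t => Q2 t * (t - ℓ)) = fun t =>
      0 * t ^ 4 + a / D * t ^ 3 + (b - a * ℓ) / D * t ^ 2 + (c - b * ℓ) / D * t + -c * ℓ / D := by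
    funext t; rw [hQ2']; ring
  have horth₁ : (fun t => t * Q2 t * (t - ℓ)) = fun t =>
      a / D * t ^ 4 + (b - a * ℓ) / D * t ^ 3 + (c - b * ℓ) / D * t ^ 2 + -c * ℓ / D * t + 0 := by
    funext t; rw [hQ2']; ring
  refine ⟨?_, ?_, ?_⟩
  · rw [horth₀, muInt_quartic hn0]
    field_simp
    ring
  · rw [horth₁, muInt_quartic hn0]
    field_simp
    ring
  · rw [hQ2', div_eq_one_iff_eq hden]
    ring

/-- The polynomial `Q_2^{0,ℓ}`: orthogonality to polynomials of degree at most 1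
with respect to `(t - ℓ) dμ_n(t)`, and normalization at `t = 1`. -/
theorem Q2_0ell_properties (n : ℕ) (hn : 2 ≤ n) (ℓ : ℝ) (h1 : (n : ℝ) * ℓ ^ 2 ≠ 1)
    (hden : ((n : ℝ) - 1) * (((n : ℝ) * ℓ + 1) ^ 2 - ((n : ℝ) - 1)) ≠ 0)
    (Q2 : ℝ → ℝ)
    (hQ2 : ∀ t, Q2 t = ((n : ℝ) ^ 2 * ((n : ℝ) * ℓ ^ 2 - 1) * t ^ 2
        + 2 * (n : ℝ) * ℓ * ((n : ℝ) - 1) * t - (n : ℝ) ^ 2 * ℓ ^ 2 + 3 * (n : ℝ) - 2)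
      / (((n : ℝ) - 1) * (((n : ℝ) * ℓ + 1) ^ 2 - ((n : ℝ) - 1)))) :
    muInt n (fun t => Q2 t * (t - ℓ)) = 0 ∧
      muInt n (fun t => t * Q2 t * (t - ℓ)) = 0 ∧ Q2 1 = 1 :=
  Q2_0ell_properties_general n hn ℓ hden Q2 hQ2
end

section
/- Let C \subseteq F_2^n be a binary orthogonal array of strength 2 and cardinality |C| \ge 2, with n \ge 3. Suppose every point y where the covering radius \rho(C) is attained has its antipode in C (i.e., t_1(y) = -1). Then \rho(C) \ge (|C| - 2)/((n-2)|C| + 2). -/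
/-- `C` is a binary orthogonal array of length `n` and strength `τ`: every projection
onto `τ` coordinates takes each value equally often. -/
def IsOA (n τ : ℕ) (C : Finset (Fin n → ZMod 2)) : Prop :=
  ∀ S : Finset (Fin n), S.card = τ → ∀ v : Fin n → ZMod 2,
    (C.filter fun x => ∀ i ∈ S, x i = v i).card * 2 ^ τ = C.card

/-- `⟨x,y⟩ = 1 - 2 d(x,y)/n`. -/
noncomputable def inn (n : ℕ) (x y : Fin n → ZMod 2) : ℝ :=
  1 - 2 * (hammingDist x y : ℝ) / (n : ℝ)

/-- Covering radius `ρ(C) = min_y max_{x ∈ C} ⟨x,y⟩`. -/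
noncomputable def covRad (n : ℕ) (C : Finset (Fin n → ZMod 2)) (hC : C.Nonempty) : ℝ :=
  Finset.univ.inf' Finset.univ_nonempty (fun y => C.sup' hC fun x => inn n x y)

open Finset

lemma zmod2_ne_iff_eq_add_one : ∀ a b : ZMod 2, a ≠ b ↔ a = b + 1 := by decide

section OrthogonalArray

variable {n : ℕ} {C : Finset (Fin n → ZMod 2)}

lemma IsOA.card_filter_pair (hOA : IsOA n 2 C) {i j : Fin n} (hij : i ≠ j) (a b : ZMod 2) :
    #{x ∈ C | x i = a ∧ x j = b} * 4 = #C := by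
  have hS : #({i, j} : Finset (Fin n)) = 2 := card_pair hij
  simpa [hij.symm] using hOA {i, j} hS fun k => if k = i then a else b

lemma IsOA.card_filter_single (hOA : IsOA n 2 C) (hn : 2 ≤ n) (i : Fin n) (a : ZMod 2) :
    #{x ∈ C | x i = a} * 2 = #C := by
  have : Nontrivial (Fin n) := Fin.nontrivial_iff_two_le.mpr hn
  obtain ⟨j, hji⟩ := exists_ne i
  have hsplit :
      #{x ∈ C | x i = a} = #{x ∈ C | x i = a ∧ x j = 0} + #{x ∈ C | x i = a ∧ x j = 1} := by
    rw [← card_filter_add_card_filter_not (fun x => x j = 0), filter_filter, filter_filter]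
    congr 3
    ext x
    simp [zmod2_ne_iff_eq_add_one]
  have h0 := hOA.card_filter_pair hji.symm a 0
  have h1 := hOA.card_filter_pair hji.symm a 1
  omega

lemma IsOA.sum_hammingDist (hOA : IsOA n 2 C) (hn : 2 ≤ n) (y : Fin n → ZMod 2) :
    (∑ x ∈ C, hammingDist x y) * 2 = n * #C := by
  have hcount : ∑ x ∈ C, hammingDist x y = ∑ i, #{x ∈ C | x i = y i + 1} := by
    simp only [hammingDist, card_filter, zmod2_ne_iff_eq_add_one]
    exact sum_comm
  simp [hcount, sum_mul, hOA.card_filter_single hn]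

lemma IsOA.sum_hammingDist_sq (hOA : IsOA n 2 C) (hn : 2 ≤ n) (y : Fin n → ZMod 2) :
    (∑ x ∈ C, hammingDist x y ^ 2) * 4 = n * (n + 1) * #C := by
  have hcount : ∑ x ∈ C, hammingDist x y ^ 2
      = ∑ i, ∑ j, #{x ∈ C | x i = y i + 1 ∧ x j = y j + 1} := by
    simp only [hammingDist, card_filter, zmod2_ne_iff_eq_add_one, sq, sum_mul_sum, ← ite_and,
      boole_mul]
    rw [sum_comm]
    exact sum_congr rfl fun i _ => sum_comm
  have hpair (i j : Fin n) : #{x ∈ C | x i = y i + 1 ∧ x j = y j + 1} * 4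
      = #C + if i = j then #C else 0 := by
    rcases eq_or_ne i j with rfl | hij
    · simp only [and_self, if_true, ← hOA.card_filter_single hn i (y i + 1)]
      ring
    · simp [hOA.card_filter_pair hij, hij]
  simp only [hcount, sum_mul, hpair, sum_add_distrib, sum_ite_eq, mem_univ, if_true, sum_const,
    card_univ, Fintype.card_fin, smul_eq_mul]
  ring

lemma IsOA.sum_inn_eq_zero (hOA : IsOA n 2 C) (hn : 2 ≤ n)
    (y : Fin n → ZMod 2) : ∑ x ∈ C, inn n x y = 0 := by
  have hn0 : (n : ℝ) ≠ 0 := by positivity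
  have h1 : (∑ x ∈ C, (hammingDist x y : ℝ)) * 2 = n * #C := by
    exact_mod_cast hOA.sum_hammingDist hn y
  have hinn (x : Fin n → ZMod 2) : inn n x y = 1 - 2 / n * hammingDist x y := by
    rw [inn]
    ring
  simp only [hinn, sum_sub_distrib, sum_const, nsmul_one, ← mul_sum]
  field_simp
  linarith

lemma IsOA.mul_sum_inn_sq (hOA : IsOA n 2 C) (hn : 2 ≤ n)
    (y : Fin n → ZMod 2) : n * ∑ x ∈ C, inn n x y ^ 2 = #C := by
  have hn0 : (n : ℝ) ≠ 0 := by positivity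
  have h1 : (∑ x ∈ C, (hammingDist x y : ℝ)) * 2 = n * #C := by
    exact_mod_cast hOA.sum_hammingDist hn y
  have h2 : (∑ x ∈ C, (hammingDist x y : ℝ) ^ 2) * 4 = n * (n + 1) * #C := by
    exact_mod_cast hOA.sum_hammingDist_sq hn y
  have hexp (x : Fin n → ZMod 2) : inn n x y ^ 2
      = 1 - 4 / n * hammingDist x y + 4 / n ^ 2 * (hammingDist x y : ℝ) ^ 2 := by
    simp only [inn]
    field_simp
    ring
  simp only [hexp, sum_add_distrib, sum_sub_distrib, sum_const, nsmul_one, ← mul_sum]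
  field_simp
  linear_combination (-2 * (n : ℝ)) * h1 + h2

lemma IsOA.mul_sum_inn_sub_mul_inn_sub (hOA : IsOA n 2 C) (hn : 2 ≤ n) (y : Fin n → ZMod 2)
    (a b : ℝ) :
    n * ∑ x ∈ C, (inn n x y - a) * (inn n x y - b) = #C * (1 + n * a * b) := by
  have hexp (x : Fin n → ZMod 2) : (inn n x y - a) * (inn n x y - b)
      = inn n x y ^ 2 - (a + b) * inn n x y + a * b := by ring
  simp only [hexp, sum_add_distrib, sum_sub_distrib, ← mul_sum, sum_const, nsmul_eq_mul,
    hOA.sum_inn_eq_zero hn]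
  linear_combination hOA.mul_sum_inn_sq hn y

lemma inn_antipode (hn : 0 < n) (y : Fin n → ZMod 2) : inn n (fun i => y i + 1) y = -1 := by
  have hd : hammingDist (fun i => y i + 1) y = n := by
    simp [hammingDist]
  have hn0 : (n : ℝ) ≠ 0 := by positivity
  simp only [inn, hd]
  field_simp
  ring

lemma le_inn_of_ne_antipode {x y : Fin n → ZMod 2} (hx : x ≠ fun i => y i + 1) :
    -1 + 2 / n ≤ inn n x y := by
  obtain ⟨i, hi⟩ : ∃ i, x i = y i := by
    by_contra! h
    exact hx (funext fun i => (zmod2_ne_iff_eq_add_one _ _).mp (h i))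
  have hlt : hammingDist x y < n := by
    calc hammingDist x y ≤ #(univ.erase i) :=
          card_le_card fun j hj => mem_erase.mpr ⟨by rintro rfl; simp_all, mem_univ j⟩
      _ < n := by simp [card_erase_of_mem, i.pos]
  have hn0 : (0 : ℝ) < n := Nat.cast_pos.mpr i.pos
  have hle : (hammingDist x y : ℝ) + 1 ≤ n := by exact_mod_cast hlt
  rw [inn]
  field_simp
  linarith

end OrthogonalArray

lemma exists_sup'_inn_eq_covRad {n : ℕ} (C : Finset (Fin n → ZMod 2)) (hC : C.Nonempty) :
    ∃ y, C.sup' hC (fun x => inn n x y) = covRad n C hC := by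
  obtain ⟨y, -, hy⟩ := exists_mem_eq_inf' univ_nonempty fun y => C.sup' hC fun x => inn n x y
  exact ⟨y, hy.symm⟩

theorem covering_radius_strength2_antipodal_bound_general (n : ℕ) (hn : 3 ≤ n)
    (C : Finset (Fin n → ZMod 2)) (hC : C.Nonempty)
    (hOA : IsOA n 2 C)
    (hant : ∀ y : Fin n → ZMod 2,
      (C.sup' hC fun x => inn n x y) = covRad n C hC → (fun i => y i + 1) ∈ C) :
    ((C.card : ℝ) - 2) / (((n : ℝ) - 2) * (C.card : ℝ) + 2) ≤ covRad n C hC := by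
  obtain ⟨y, hy⟩ := exists_sup'_inn_eq_covRad C hC
  set ρ := covRad n C hC
  set ℓ : ℝ := -1 + 2 / n
  have hnonpos : ∀ x ∈ C.erase (fun i => y i + 1), (inn n x y - ℓ) * (inn n x y - ρ) ≤ 0 := by
    intro x hx
    have hlow : ℓ ≤ inn n x y := le_inn_of_ne_antipode (ne_of_mem_erase hx)
    have hhigh : inn n x y ≤ ρ := hy ▸ le_sup' (fun x => inn n x y) (mem_of_mem_erase hx)
    exact mul_nonpos_of_nonneg_of_nonpos (sub_nonneg.mpr hlow) (sub_nonpos.mpr hhigh)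
  have hsum : ∑ x ∈ C, (inn n x y - ℓ) * (inn n x y - ρ) ≤ (-1 - ℓ) * (-1 - ρ) := by
    rw [← add_sum_erase _ _ (hant y hy), inn_antipode (by omega)]
    linarith [sum_nonpos hnonpos]
  have hnℓ : (n : ℝ) * ℓ = 2 - n := by
    have : (n : ℝ) ≠ 0 := by positivity
    simp only [ℓ]
    field_simp
    ring
  have hkey : (#C : ℝ) * (1 + (2 - n) * ρ) ≤ 2 * (1 + ρ) :=
    calc (#C : ℝ) * (1 + (2 - n) * ρ)
        = n * ∑ x ∈ C, (inn n x y - ℓ) * (inn n x y - ρ) := by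
          rw [hOA.mul_sum_inn_sub_mul_inn_sub (by omega) y ℓ ρ, ← hnℓ, mul_assoc]
      _ ≤ n * ((-1 - ℓ) * (-1 - ρ)) := by gcongr
      _ = 2 * (1 + ρ) := by linear_combination (1 + ρ) * hnℓ
  have hden : 0 < ((n : ℝ) - 2) * #C + 2 := by
    have : (3 : ℝ) ≤ n := by exact_mod_cast hn
    nlinarith [(#C).cast_nonneg (α := ℝ)]
  rw [div_le_iff₀ hden]
  linear_combination hkey

/-- Case `t_1(y) = -1` for all points attaining the covering radius: LP bound for
strength-2 orthogonal arrays depending on the cardinality. -/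
theorem covering_radius_strength2_antipodal_bound (n : ℕ) (hn : 3 ≤ n)
    (C : Finset (Fin n → ZMod 2)) (hC : C.Nonempty) (hcard : 2 ≤ C.card)
    (hOA : IsOA n 2 C)
    (hant : ∀ y : Fin n → ZMod 2,
      (C.sup' hC fun x => inn n x y) = covRad n C hC → (fun i => y i + 1) ∈ C) :
    ((C.card : ℝ) - 2) / (((n : ℝ) - 2) * (C.card : ℝ) + 2) ≤ covRad n C hC :=
  covering_radius_strength2_antipodal_bound_general n hn C hC hOA hant
end

section
/- Let q = 2^{2m} with m \ge 1, let H \le F_{q^2}^* be the subgroup of order q+1. Then the images \{a_1(x + 1/x) : x \in H, x \ne 1\} \setminus \{0\} and \{a_1(y + 1/y) : y \in F_q^*, y \ne 1\} \setminus \{0\} are disjoint for any a_1 \in F_q^*. -/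
/-- The nonzero values of `a₁(x + 1/x)` for `x` in the subgroup `H` of order
`q + 1` of `F_{q^2}^*` and for `x` in `F_q^*` are disjoint. -/
theorem images_disjoint (m : ℕ) (hm : 1 ≤ m) (q : ℕ) (hq : q = 2 ^ (2 * m))
    (F : Type) [Field F] [Fintype F] (hcard : Fintype.card F = q ^ 2)
    (a1 : F) (ha1 : a1 ≠ 0) (ha1q : a1 ^ q = a1) :
    ({c : F | ∃ x : F, x ^ (q + 1) = 1 ∧ x ≠ 1 ∧ c = a1 * (x + x⁻¹)} \ {0}) ∩
      ({c : F | ∃ y : F, y ^ (q - 1) = 1 ∧ y ≠ 1 ∧ c = a1 * (y + y⁻¹)} \ {0}) = ∅ := by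
  -- characteristic 2
  have hp : (ringChar F).Prime := CharP.char_is_prime F _
  obtain ⟨n, -, hcard'⟩ := FiniteField.card F (ringChar F)
  have hqpos : 4 ≤ q := by
    rw [hq]
    calc (4:ℕ) = 2 ^ (2 * 1) := rfl
    _ ≤ 2 ^ (2 * m) := Nat.pow_le_pow_right (by norm_num) (by omega)
  have hchar2 : ringChar F = 2 := by
    have hdvd : ringChar F ∣ 2 ^ (4 * m) := by
      have : (ringChar F) ^ (n : ℕ) = 2 ^ (4 * m) := by
        rw [← hcard', hcard, hq, ← pow_mul]; ring_nf
      exact this ▸ dvd_pow_self _ n.ne_zero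
    have := hp.dvd_of_dvd_pow hdvd
    exact (Nat.prime_dvd_prime_iff_eq hp Nat.prime_two).mp this
  have h2 : (2 : F) = 0 := by
    haveI : CharP F 2 := hchar2 ▸ ringChar.charP F
    exact CharP.cast_eq_zero F 2
  -- key lemma: z^(q+1) = 1 and z^(q-1) = 1 implies z = 1
  have key : ∀ z : F, z ^ (q + 1) = 1 → z ^ (q - 1) = 1 → z = 1 := by
    intro z h1 h2'
    have hsq : z ^ 2 = 1 := by
      have : z ^ (q + 1) = z ^ (q - 1) * z ^ 2 := by
        rw [← pow_add]; congr 1; omega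
      rw [h1, h2', one_mul] at this; exact this.symm
    have hz : (z - 1) ^ 2 = 0 := by
      linear_combination hsq + (1 - z) * h2
    exact sub_eq_zero.mp ((pow_eq_zero_iff (n := 2) (by norm_num)).mp hz)
  ext c
  simp only [Set.mem_inter_iff, Set.mem_diff, Set.mem_setOf_eq,
    Set.mem_singleton_iff, Set.mem_empty_iff_false, iff_false]
  rintro ⟨⟨⟨x, hx, hx1, rfl⟩, hc0⟩, ⟨y, hy, hy1, hcy⟩, -⟩
  have hxne : x ≠ 0 := by
    rintro rfl; rw [zero_pow (by omega)] at hx; exact zero_ne_one hx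
  have hyne : y ≠ 0 := by
    rintro rfl; rw [zero_pow (by omega)] at hy; exact zero_ne_one hy
  have heq : x + x⁻¹ = y + y⁻¹ := mul_left_cancel₀ ha1 hcy
  have hfac : (x - y) * (x * y - 1) = 0 := by
    field_simp at heq
    linear_combination heq
  rcases mul_eq_zero.mp hfac with h | h
  · have hxy : x = y := sub_eq_zero.mp h
    exact hx1 (key x hx (hxy ▸ hy))
  · have hxy : x = y⁻¹ := eq_inv_of_mul_eq_one_left (by linear_combination h)
    have : x ^ (q - 1) = 1 := by
      rw [hxy, inv_pow, hy, inv_one]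
    exact hx1 (key x hx this)
end

section
/- Let q = 2^{2m}, H the subgroup of F_{q^2}^* of order q+1, and a_1 \in F_q^*. Define N_1^*(a_1) = |\{x \in H : Tr_{q/2}(a_1(x + 1/x)) = 0\}| and N_2^*(a_1) = 1 + 2|\{v \in V : Tr_{q/2}(v) = 0\}| where V = \{a_1(y + 1/y) : y \in F_q^*\} \setminus \{0\}. Then N_1^*(a_1) + N_2^*(a_1) = q. -/
/-!
The map `x ↦ a₁ (x + x⁻¹)` sends `1` to `0` and is two-to-one on `H \ {1}` and on
`𝔽_q^* \ {1}` (its fibres are `{x, x⁻¹}`), with values in `𝔽_q^*` on both sets. As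
`H ∩ 𝔽_q^* = {1}` in characteristic two, the two sets of nonzero values are disjoint; having
`q/2` and `q/2 - 1` elements, they partition `𝔽_q^*`. Hence
`N₁* + N₂* = 2 + 2·#{v ∈ 𝔽_q^* | Tr v = 0} = 2·#{v ∈ 𝔽_q | Tr v = 0} = q`, because the trace
is balanced on `𝔽_q`.
-/

open Finset Polynomial

lemma Finset.card_eq_two_mul_card_image {α β : Type*} [DecidableEq β] {s : Finset α}
    {f : α → β} (h : ∀ x ∈ s, #{y ∈ s | f y = f x} = 2) : #s = 2 * #(s.image f) := by
  rw [card_eq_sum_card_image f s, mul_comm, ← smul_eq_mul, ← sum_const]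
  refine sum_congr rfl fun v hv => ?_
  obtain ⟨x, hx, rfl⟩ := mem_image.1 hv
  exact h x hx

lemma pow_sub_one_eq_one_iff {G₀ : Type*} [GroupWithZero G₀] {q : ℕ} (hq : 1 < q) {y : G₀} :
    y ^ (q - 1) = 1 ↔ y ≠ 0 ∧ y ^ q = y := by
  rw [← pow_sub_one_mul (by omega : q ≠ 0) y]
  constructor
  · intro h
    refine ⟨fun hy => ?_, by rw [h, one_mul]⟩
    rw [hy, zero_pow (by omega)] at h
    exact zero_ne_one h
  · rintro ⟨hy, h⟩
    exact (mul_eq_right₀ hy).1 h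

lemma add_inv_eq_add_inv_iff {K : Type*} [Field K] {x z : K} (hx : x ≠ 0) (hz : z ≠ 0) :
    x + x⁻¹ = z + z⁻¹ ↔ x = z ∨ x = z⁻¹ := by
  have key : x + x⁻¹ - (z + z⁻¹) = (x - z) * (x * z - 1) / (x * z) := by
    field_simp
    ring
  rw [← sub_eq_zero, key, div_eq_zero_iff, mul_eq_zero, sub_eq_zero, sub_eq_zero,
    mul_eq_one_iff_eq_inv₀ hz]
  simp [hx, hz]

lemma mul_add_inv_pow_eq_self {K : Type*} [Field K] {p k q : ℕ} [ExpChar K p] (hq : q = p ^ k)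
    {a x : K} (haq : a ^ q = a) (hx : x ^ q = x ∨ x ^ q = x⁻¹) :
    (a * (x + x⁻¹)) ^ q = a * (x + x⁻¹) := by
  rw [mul_pow, hq, add_pow_expChar_pow, ← hq, haq, inv_pow]
  rcases hx with hx | hx <;> rw [hx]
  rw [inv_inv, add_comm]

lemma FiniteField.card_filter_pow_eq_one {F : Type*} [Field F] [Fintype F] [DecidableEq F]
    {n : ℕ} (hn : 0 < n) (hdvd : n ∣ Fintype.card F - 1) : #{x : F | x ^ n = 1} = n := by
  obtain ⟨g, hg⟩ := IsCyclic.exists_generator (α := Fˣ)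
  have hg_order : orderOf g = Fintype.card F - 1 := by
    rw [orderOf_eq_card_of_forall_mem_zpowers hg, Nat.card_eq_fintype_card, Fintype.card_units]
  have hζ : IsPrimitiveRoot ((g ^ ((Fintype.card F - 1) / n) : Fˣ) : F) n := by
    have hpos : 0 < Fintype.card F - 1 := hg_order ▸ orderOf_pos g
    have h := IsPrimitiveRoot.orderOf ((g ^ ((Fintype.card F - 1) / n) : Fˣ) : F)
    rwa [orderOf_units, orderOf_pow, hg_order, Nat.gcd_eq_right (Nat.div_dvd_of_dvd hdvd),
      Nat.div_div_self hdvd hpos.ne'] at h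
  have hroots : #{x : F | x ^ n = 1} = #(nthRootsFinset n (1 : F)) := by
    congr 1
    ext x
    simp [mem_nthRootsFinset hn]
  rw [hroots, hζ.card_nthRootsFinset]

section QuadraticExtension

variable {F : Type*} [Field F] [Fintype F] [DecidableEq F] {q : ℕ}

lemma card_pow_add_one_eq_one (hcard : Fintype.card F = q ^ 2) :
    #{x : F | x ^ (q + 1) = 1} = q + 1 :=
  FiniteField.card_filter_pow_eq_one q.succ_pos
    ⟨q - 1, by rw [hcard]; simpa using Nat.sq_sub_sq q 1⟩

lemma card_pow_sub_one_eq_one (hcard : Fintype.card F = q ^ 2) (hq : 1 < q) :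
    #{y : F | y ^ (q - 1) = 1} = q - 1 :=
  FiniteField.card_filter_pow_eq_one (by omega)
    ⟨q + 1, by rw [hcard, mul_comm]; simpa using Nat.sq_sub_sq q 1⟩

lemma card_pow_eq_self_and (hq : 1 < q) (P : F → Prop) [DecidablePred P] (hP : P 0) :
    #{u : F | u ^ q = u ∧ P u} = #{u : F | u ^ (q - 1) = 1 ∧ P u} + 1 := by
  have h : univ.filter (fun u : F => u ^ q = u ∧ P u) =
      insert 0 (univ.filter fun u : F => u ^ (q - 1) = 1 ∧ P u) := by
    ext u
    rcases eq_or_ne u 0 with rfl | hu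
    · simp [zero_pow (by omega : q ≠ 0), hP]
    · simp [hu, pow_sub_one_eq_one_iff hq]
  rw [h, card_insert_of_notMem (by simp [zero_pow (by omega : q - 1 ≠ 0)])]

end QuadraticExtension

namespace CharTwo

variable {K : Type*} [Field K] [CharP K 2] {a : K}

lemma eq_one_of_sq_eq_one {x : K} (h : x ^ 2 = 1) : x = 1 :=
  sq_injective (h.trans (one_pow 2).symm)

lemma add_inv_eq_zero_iff {x : K} (hx : x ≠ 0) : x + x⁻¹ = 0 ↔ x = 1 := by
  have h := add_inv_eq_add_inv_iff hx (one_ne_zero (α := K))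
  rwa [inv_one, add_self_eq_zero, or_self] at h

lemma eq_one_of_mul_add_inv_eq {q : ℕ} (hq : 1 < q) (ha : a ≠ 0) {x y : K}
    (hx : x ^ (q + 1) = 1) (hy : y ^ (q - 1) = 1) (h : a * (x + x⁻¹) = a * (y + y⁻¹)) :
    x = 1 := by
  have hx0 : x ≠ 0 := by
    rintro rfl
    simp at hx
  have hx' : x ^ (q - 1) = 1 := by
    rcases (add_inv_eq_add_inv_iff hx0 ((pow_sub_one_eq_one_iff hq).1 hy).1).1
      (mul_left_cancel₀ ha h) with rfl | rfl
    · exact hy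
    · rw [inv_pow, hy, inv_one]
  refine eq_one_of_sq_eq_one ?_
  rwa [show q + 1 = q - 1 + 2 by omega, pow_add, hx', one_mul] at hx

variable [DecidableEq K]

lemma card_eq_two_mul_card_image_mul_add_inv {s : Finset K} (ha : a ≠ 0) (h0 : 0 ∉ s)
    (h1 : 1 ∉ s) (hinv : ∀ x ∈ s, x⁻¹ ∈ s) :
    #s = 2 * #(s.image fun x => a * (x + x⁻¹)) := by
  refine card_eq_two_mul_card_image fun x hx => ?_
  have hx0 : x ≠ 0 := ne_of_mem_of_not_mem hx h0
  have hfiber : {y ∈ s | a * (y + y⁻¹) = a * (x + x⁻¹)} = {x, x⁻¹} := by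
    ext y
    simp only [mem_filter, mem_insert, mem_singleton, mul_right_inj' ha]
    constructor
    · rintro ⟨hy, hxy⟩
      exact (add_inv_eq_add_inv_iff (ne_of_mem_of_not_mem hy h0) hx0).1 hxy
    · rintro (rfl | rfl)
      · exact ⟨hx, rfl⟩
      · exact ⟨hinv x hx, by rw [inv_inv, add_comm]⟩
  have hx_ne_inv : x ≠ x⁻¹ := fun h => ne_of_mem_of_not_mem hx h1 <| eq_one_of_sq_eq_one <| by
    rw [sq]
    nth_rw 2 [h]
    exact mul_inv_cancel₀ hx0
  rw [hfiber, card_pair hx_ne_inv]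

lemma card_filter_mul_add_inv {S : Finset K} (ha : a ≠ 0) (h0 : 0 ∉ S) (h1 : 1 ∈ S)
    (hinv : ∀ x ∈ S, x⁻¹ ∈ S) (P : K → Prop) [DecidablePred P] (hP : P 0) :
    #{x ∈ S | P (a * (x + x⁻¹))} =
      1 + 2 * #{v ∈ (S.image fun x => a * (x + x⁻¹)).erase 0 | P v} := by
  have hzero : ∀ x ∈ S, a * (x + x⁻¹) = 0 ↔ x = 1 := fun x hx => by
    rw [mul_eq_zero, or_iff_right ha, add_inv_eq_zero_iff (ne_of_mem_of_not_mem hx h0)]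
  set T := {x ∈ S.erase 1 | P (a * (x + x⁻¹))} with hT
  have hcard : #{x ∈ S | P (a * (x + x⁻¹))} = #T + 1 := by
    rw [hT, filter_erase, card_erase_add_one]
    simpa [h1, add_self_eq_zero] using hP
  have himage : (T.image fun x => a * (x + x⁻¹)) =
      {v ∈ (S.image fun x => a * (x + x⁻¹)).erase 0 | P v} := by
    ext v
    simp only [hT, mem_image, mem_filter, mem_erase]
    constructor
    · rintro ⟨x, ⟨⟨hx1, hx⟩, hPx⟩, rfl⟩
      exact ⟨⟨fun h => hx1 ((hzero x hx).1 h), x, hx, rfl⟩, hPx⟩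
    · rintro ⟨⟨hv0, x, hx, rfl⟩, hPv⟩
      exact ⟨x, ⟨⟨fun h => hv0 ((hzero x hx).2 h), hx⟩, hPv⟩, rfl⟩
  rw [hcard, ← himage, card_eq_two_mul_card_image_mul_add_inv ha, add_comm]
  · simp [hT, h0]
  · simp [hT]
  · intro x hx
    simp only [hT, mem_filter, mem_erase, ne_eq, inv_eq_one, inv_inv, add_comm x⁻¹] at hx ⊢
    exact ⟨⟨hx.1.1, hinv x hx.1.2⟩, hx.2⟩

lemma card_filter_pow_eq_one_mul_add_inv [Fintype K] {n : ℕ} (hn : n ≠ 0) (ha : a ≠ 0)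
    (P : K → Prop) [DecidablePred P] (hP : P 0) :
    #{x : K | x ^ n = 1 ∧ P (a * (x + x⁻¹))} =
      1 + 2 * #{v ∈ ((univ.filter fun x : K => x ^ n = 1).image
        fun x => a * (x + x⁻¹)).erase 0 | P v} := by
  rw [← filter_filter]
  exact card_filter_mul_add_inv ha (by simp [zero_pow hn]) (by simp) (by simp [inv_pow]) P hP

end CharTwo

section AbsTrace

variable {K : Type*} [Field K]

/-- On the subfield `{u | u ^ 2 ^ k = u}` of `K` this is the absolute trace to `𝔽₂`. -/
def absTrace (k : ℕ) (v : K) : K := ∑ i ∈ range k, v ^ 2 ^ i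

lemma absTrace_zero (k : ℕ) : absTrace k (0 : K) = 0 :=
  sum_eq_zero fun i _ => zero_pow (by positivity)

lemma exists_absTrace_ne_zero_of_lt_card {k : ℕ} (hk : 1 ≤ k) {s : Finset K}
    (hs : 2 ^ (k - 1) < #s) : ∃ u ∈ s, absTrace k u ≠ 0 := by
  by_contra! h
  set P : K[X] := ∑ i ∈ range k, X ^ 2 ^ i
  have hP_coeff : P.coeff 1 = 1 := by
    rw [finsetSum_coeff, sum_eq_single_of_mem 0 (mem_range.2 hk)]
    · simp
    · intro i _ hi
      rw [coeff_X_pow, if_neg]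
      have := Nat.one_lt_two_pow hi
      omega
  have hP_deg : P.natDegree ≤ 2 ^ (k - 1) := by
    refine natDegree_sum_le_of_forall_le _ _ fun i hi => ?_
    rw [natDegree_X_pow]
    exact Nat.pow_le_pow_right two_pos (by have := mem_range.1 hi; omega)
  have hP_zero : P = 0 := by
    refine eq_zero_of_natDegree_lt_card_of_eval_eq_zero' P s (fun u hu => ?_)
      (hP_deg.trans_lt hs)
    simpa [P, eval_finsetSum, absTrace] using h u hu
  simp [hP_zero] at hP_coeff

variable [CharP K 2]

lemma absTrace_add (k : ℕ) (u v : K) : absTrace k (u + v) = absTrace k u + absTrace k v := by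
  simp only [absTrace, ← sum_add_distrib, add_pow_char_pow]

lemma absTrace_sq_add (k : ℕ) (u : K) : absTrace k u ^ 2 + u = absTrace k u + u ^ 2 ^ k := by
  simp only [absTrace, CharTwo.sum_sq, ← pow_mul, ← pow_succ]
  rw [← sum_range_succ (fun i => u ^ 2 ^ i), sum_range_succ', pow_zero, pow_one]

lemma absTrace_eq_zero_or_one {k : ℕ} {u : K} (hu : u ^ 2 ^ k = u) :
    absTrace k u = 0 ∨ absTrace k u = 1 := by
  have h : absTrace k u * (absTrace k u + 1) = 0 := by
    have := absTrace_sq_add k u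
    rw [hu, add_left_inj] at this
    rw [mul_add_one, ← sq, this, CharTwo.add_self_eq_zero]
  rcases mul_eq_zero.1 h with h | h
  · exact Or.inl h
  · exact Or.inr (CharTwo.add_eq_zero.1 h)

variable [Fintype K] [DecidableEq K]

lemma two_mul_card_absTrace_eq_zero {k : ℕ} (hk : 1 ≤ k)
    (hcard : #{u : K | u ^ 2 ^ k = u} = 2 ^ k) :
    2 * #{u : K | u ^ 2 ^ k = u ∧ absTrace k u = 0} = 2 ^ k := by
  set s : Finset K := {u | u ^ 2 ^ k = u}
  obtain ⟨u₀, hu₀s, hu₀⟩ := exists_absTrace_ne_zero_of_lt_card hk (s := s)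
    (hcard ▸ Nat.pow_lt_pow_right one_lt_two (by omega))
  have hu₀s : u₀ ^ 2 ^ k = u₀ := (mem_filter.1 hu₀s).2
  have hu₀_one : absTrace k u₀ = 1 := (absTrace_eq_zero_or_one hu₀s).resolve_left hu₀
  have hshift : ∀ u, u ^ 2 ^ k = u → (u + u₀) ^ 2 ^ k = u + u₀ := fun u hu => by
    rw [add_pow_char_pow, hu, hu₀s]
  have hbalance : #{u ∈ s | absTrace k u = 0} = #{u ∈ s | ¬absTrace k u = 0} := by
    refine card_nbij' (· + u₀) (· + u₀) ?_ ?_ (fun u _ => CharTwo.add_cancel_right u u₀)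
      (fun u _ => CharTwo.add_cancel_right u u₀)
    · intro u hu
      simp only [s, coe_filter, mem_filter, mem_univ, true_and, Set.mem_ofPred_eq] at hu ⊢
      rw [absTrace_add, hu.2, hu₀_one, zero_add]
      exact ⟨hshift u hu.1, one_ne_zero⟩
    · intro u hu
      simp only [s, coe_filter, mem_filter, mem_univ, true_and, Set.mem_ofPred_eq] at hu ⊢
      rw [absTrace_add, (absTrace_eq_zero_or_one hu.1).resolve_left hu.2, hu₀_one,
        CharTwo.add_self_eq_zero]
      exact ⟨hshift u hu.1, rfl⟩
  have hsplit := card_filter_add_card_filter_not (s := s) (fun u => absTrace k u = 0)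
  rw [← hbalance, hcard, filter_filter] at hsplit
  omega

lemma two_add_two_mul_card_absTrace_eq_zero {q k : ℕ} (hq : q = 2 ^ k) (hk : 1 ≤ k)
    (hcard : Fintype.card K = q ^ 2) :
    2 + 2 * #{v : K | v ^ (q - 1) = 1 ∧ absTrace k v = 0} = q := by
  have hq1 : 1 < q := hq ▸ Nat.one_lt_two_pow (by omega)
  have hsubfield : #{u : K | u ^ q = u} = q := by
    simpa [card_pow_sub_one_eq_one hcard hq1, Nat.sub_add_cancel hq1.le] using
      card_pow_eq_self_and (F := K) hq1 (fun _ => True) trivial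
  have htrace := two_mul_card_absTrace_eq_zero hk (hq ▸ hsubfield)
  rw [← hq, card_pow_eq_self_and (F := K) hq1 (absTrace k · = 0) (absTrace_zero k)] at htrace
  omega

end AbsTrace

section UnitCircle

variable {F : Type*} [Field F] [Fintype F] [DecidableEq F] [CharP F 2] {q k : ℕ} {a : F}

lemma image_mul_add_inv_erase_zero_subset (hq : q = 2 ^ k) (hk : 1 ≤ k) (haq : a ^ q = a)
    {S : Finset F} (hS : ∀ x ∈ S, x ^ q = x ∨ x ^ q = x⁻¹) :
    (S.image fun x => a * (x + x⁻¹)).erase 0 ⊆ univ.filter fun y : F => y ^ (q - 1) = 1 := by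
  intro v hv
  obtain ⟨hv0, x, hx, rfl⟩ : v ≠ 0 ∧ ∃ x ∈ S, a * (x + x⁻¹) = v := by simpa using hv
  have hq1 : 1 < q := hq ▸ Nat.one_lt_two_pow (by omega)
  simpa [pow_sub_one_eq_one_iff hq1, hv0] using mul_add_inv_pow_eq_self hq haq (hS x hx)

theorem card_filter_unitCircle_add_card_filter_values (hq : q = 2 ^ k) (hk : 1 ≤ k)
    (hcard : Fintype.card F = q ^ 2) (ha : a ≠ 0) (haq : a ^ q = a)
    (P : F → Prop) [DecidablePred P] (hP : P 0) :
    #{x : F | x ^ (q + 1) = 1 ∧ P (a * (x + x⁻¹))} +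
      (1 + 2 * #{v ∈ ((univ.filter fun y : F => y ^ (q - 1) = 1).image
        fun y => a * (y + y⁻¹)).erase 0 | P v}) =
      2 + 2 * #{v : F | v ^ (q - 1) = 1 ∧ P v} := by
  have hq1 : 1 < q := hq ▸ Nat.one_lt_two_pow (by omega)
  set H : Finset F := {x | x ^ (q + 1) = 1} with hH
  set U : Finset F := {y | y ^ (q - 1) = 1} with hU
  set A := (H.image fun x => a * (x + x⁻¹)).erase 0
  set V := (U.image fun y => a * (y + y⁻¹)).erase 0
  have hAcard : #H = 1 + 2 * #A := by
    simpa only [and_true, filter_true] using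
      CharTwo.card_filter_pow_eq_one_mul_add_inv q.succ_ne_zero ha (fun _ => True) trivial
  have hVcard : #U = 1 + 2 * #V := by
    simpa only [and_true, filter_true] using
      CharTwo.card_filter_pow_eq_one_mul_add_inv (by omega : q - 1 ≠ 0) ha (fun _ => True) trivial
  have hHcard : #H = q + 1 := card_pow_add_one_eq_one hcard
  have hUcard : #U = q - 1 := card_pow_sub_one_eq_one hcard hq1
  have hAU : A ⊆ U := image_mul_add_inv_erase_zero_subset hq hk haq fun x hx =>
    Or.inr (eq_inv_of_mul_eq_one_left (by simpa [H, pow_succ] using hx))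
  have hVU : V ⊆ U := image_mul_add_inv_erase_zero_subset hq hk haq fun y hy =>
    Or.inl ((pow_sub_one_eq_one_iff hq1).1 (by simpa [U] using hy)).2
  have hdisj : Disjoint A V := by
    refine disjoint_left.2 fun v hvA hvV => ?_
    simp only [A, V, H, U, mem_erase, mem_image, mem_filter, mem_univ, true_and] at hvA hvV
    obtain ⟨hv0, x, hx, rfl⟩ := hvA
    obtain ⟨-, y, hy, hyx⟩ := hvV
    rw [CharTwo.eq_one_of_mul_add_inv_eq hq1 ha hx hy hyx.symm, inv_one,
      CharTwo.add_self_eq_zero, mul_zero] at hv0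
    exact hv0 rfl
  have hunion : A ∪ V = U := by
    refine eq_of_subset_of_card_le (union_subset hAU hVU) ?_
    rw [card_union_of_disjoint hdisj, hUcard]
    omega
  rw [CharTwo.card_filter_pow_eq_one_mul_add_inv q.succ_ne_zero ha P hP, ← hH, ← filter_filter,
    ← hU, ← hunion, filter_union, card_union_of_disjoint (disjoint_filter_filter hdisj)]
  ring

end UnitCircle

/-- `N₁*(a₁) + N₂*(a₁) = q`, where `N₁*` counts elements of the subgroup `H` of
order `q+1` of `F_{q^2}^*` with `Tr_{q/2}(a₁(x + 1/x)) = 0`, and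
`N₂* = 1 + 2·|{v ∈ V : Tr_{q/2}(v) = 0}|` for the nonzero values `V` of
`a₁(y + 1/y)` on `F_q^*`. -/
theorem N1_plus_N2_eq_q (m : ℕ) (hm : 1 ≤ m) (q : ℕ) (hq : q = 2 ^ (2 * m))
    (F : Type) [Field F] [Fintype F] [DecidableEq F] (hcard : Fintype.card F = q ^ 2)
    (a1 : F) (ha1 : a1 ≠ 0) (ha1q : a1 ^ q = a1)
    (tr : F → F) (htr : ∀ v : F, tr v = ∑ i ∈ Finset.range (2 * m), v ^ 2 ^ i) :
    (Finset.univ.filter fun x : F =>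
        x ^ (q + 1) = 1 ∧ tr (a1 * (x + x⁻¹)) = 0).card
      + (1 + 2 * (Finset.univ.filter fun v : F =>
          (∃ y : F, y ^ (q - 1) = 1 ∧ v = a1 * (y + y⁻¹)) ∧ v ≠ 0 ∧ tr v = 0).card)
      = q := by
  obtain rfl : tr = absTrace (2 * m) := funext htr
  have hk : 1 ≤ 2 * m := by omega
  have : CharP F 2 := ringChar.of_eq <| FiniteField.even_card_iff_char_two.2 <| by
    rw [hcard, hq, ← pow_mul, Nat.pow_mod]
    simp [show 2 * m * 2 ≠ 0 by omega]
  have hV : (univ.filter fun v : F =>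
      (∃ y : F, y ^ (q - 1) = 1 ∧ v = a1 * (y + y⁻¹)) ∧ v ≠ 0 ∧ absTrace (2 * m) v = 0) =
      {v ∈ ((univ.filter fun y : F => y ^ (q - 1) = 1).image
        fun y => a1 * (y + y⁻¹)).erase 0 | absTrace (2 * m) v = 0} := by
    ext v
    simp only [mem_filter, mem_univ, true_and, mem_erase, mem_image]
    grind
  rw [hV, card_filter_unitCircle_add_card_filter_values hq hk hcard ha1 ha1q
    (absTrace (2 * m) · = 0) (absTrace_zero _), two_add_two_mul_card_absTrace_eq_zero hq hk hcard]
end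

section
/- Let n \ge 4 and let C \subseteq F_2^n be an orthogonal array of strength 4 such that every point y attaining the covering radius has its antipode in C. Then for every real a for which the denominator is positive, \rho(C) \ge (|C|(n^2 a^2 - 2n(n-2)a + 3n - 2) - 2n^2(1+a)^2) / (n|C|(n(n-2)a^2 - 2na + n - 2) + 2n^2(1+a)^2). -/
/-!
Let `y` attain the covering radius `ρ`, so that the antipode `ȳ` of `y` lies in `C`. Every other
`x ∈ C` satisfies `-1 + 2/n ≤ ⟨x,y⟩ ≤ ρ`, where `f(t) = (t + 1 - 2/n)(t - ρ)(t - a)²` is `≤ 0`;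
hence `∑_{x ∈ C} f(⟨x,y⟩) ≤ f(-1)`. Strength 4 evaluates the left side exactly: double counting
gives `∑_{x ∈ C} (d(x,y) choose k) = |C| (n choose k) / 2^k` for `k ≤ 4`, and the Newton
forward-difference series writes any quartic in `d` in the basis `(d choose k)`. The result is
`|C| f₀ ≤ f(-1)`, which is the bound solved for `ρ`.
-/

open Finset Polynomial
open scoped fwdDiff

theorem ZMod.two_ne_iff_eq_add_one (a b : ZMod 2) : a ≠ b ↔ a = b + 1 := by decide +revert

theorem hammingDist_eq_card_iff {ι : Type*} [Fintype ι] {β : ι → Type*}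
    [∀ i, DecidableEq (β i)] {x y : ∀ i, β i} :
    hammingDist x y = Fintype.card ι ↔ ∀ i, x i ≠ y i := by
  rw [hammingDist, card_eq_iff_eq_univ, filter_eq_self]
  simp

theorem Polynomial.eval_natCast_eq_sum_choose_mul_fwdDiff_iter {R : Type*} [CommRing R]
    (P : R[X]) {m : ℕ} (hP : P.natDegree < m) (d : ℕ) :
    P.eval (d : R) = ∑ k ∈ range m, (d.choose k : R) * Δ_[1] ^[k] P.eval 0 := by
  have hd := shift_eq_sum_fwdDiff_iter 1 P.eval d 0
  simp only [zero_add, nsmul_eq_mul, mul_one] at hd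
  rw [hd, sum_subset (range_subset_range.2 (Nat.le_add_right (d + 1) m)),
    ← sum_subset (range_subset_range.2 (Nat.le_add_left m (d + 1)))]
  · intro k _ hk
    rw [fwdDiff_iter_eq_zero_of_degree_lt (hP.trans_le (not_lt.1 (mt mem_range.2 hk))),
      Pi.zero_apply, mul_zero]
  · intro k _ hk
    rw [Nat.choose_eq_zero_of_lt (not_lt.1 (mt mem_range.2 hk)), Nat.cast_zero, zero_mul]

/-- The test function of the linear programming bound: it is `≤ 0` on `[-1 + 2/n, ρ]`. -/
noncomputable def lpPoly (n : ℕ) (ρ a t : ℝ) : ℝ := (t + 1 - 2 / n) * (t - ρ) * (t - a) ^ 2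

section OrthogonalArray

variable {n τ k : ℕ} {C : Finset (Fin n → ZMod 2)}

theorem IsOA.of_succ (h : IsOA n (τ + 1) C) (hτ : τ < n) : IsOA n τ C := by
  intro S hS v
  obtain ⟨j, -, hj⟩ := exists_mem_notMem_of_card_lt_card (s := S) (t := univ)
    (by simpa [hS] using hτ)
  have hfiber : ∀ b : ZMod 2,
      #{x ∈ {x ∈ C | ∀ i ∈ S, x i = v i} | x j = b} * 2 ^ (τ + 1) = #C := by
    intro b
    rw [filter_filter, ← h (insert j S) (by rw [card_insert_of_notMem hj, hS])
      (Function.update v j b)]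
    congr 2
    refine filter_congr fun x _ => ?_
    rw [forall_mem_insert, Function.update_self, and_comm]
    refine and_congr_right fun _ => forall₂_congr fun i hi => ?_
    rw [Function.update_of_ne (ne_of_mem_of_not_mem hi hj)]
  have hsum := sum_congr rfl fun b (_ : b ∈ univ) => hfiber b
  rw [sum_const, card_univ, ZMod.card, smul_eq_mul, ← sum_mul, pow_succ] at hsum
  rw [card_eq_sum_card_fiberwise (f := fun x => x j) (t := univ)
    fun _ _ => mem_coe.2 (mem_univ _)]
  linarith

theorem IsOA.of_le (h : IsOA n τ C) (hτ : τ ≤ n) (hk : k ≤ τ) : IsOA n k C := by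
  induction τ, hk using Nat.le_induction with
  | base => exact h
  | succ m _ ih => exact ih (h.of_succ (by omega)) (by omega)

theorem IsOA.sum_choose_hammingDist_mul_pow (h : IsOA n k C) (y : Fin n → ZMod 2) :
    (∑ x ∈ C, (hammingDist x y).choose k) * 2 ^ k = n.choose k * #C := by
  have hchoose : ∀ x, (hammingDist x y).choose k
      = #{S ∈ powersetCard k univ | ∀ i ∈ S, x i = y i + 1} := by
    intro x
    rw [hammingDist, ← card_powersetCard]
    congr 1
    ext S
    simp [mem_powersetCard, subset_iff, ZMod.two_ne_iff_eq_add_one, and_comm]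
  have hdouble := sum_card_bipartiteAbove_eq_sum_card_bipartiteBelow (s := C)
    (t := powersetCard k univ) (r := fun x S => ∀ i ∈ S, x i = y i + 1)
  simp only [bipartiteAbove, bipartiteBelow] at hdouble
  simp_rw [hchoose]
  rw [hdouble, sum_mul, sum_congr rfl fun S hS => h S (mem_powersetCard.1 hS).2 _, sum_const,
    card_powersetCard, card_univ, Fintype.card_fin, smul_eq_mul]

theorem IsOA.sum_eval_hammingDist (h : IsOA n τ C) (hτ : τ ≤ n) (P : ℝ[X])
    (hP : P.natDegree ≤ τ) (y : Fin n → ZMod 2) :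
    ∑ x ∈ C, P.eval (hammingDist x y : ℝ)
      = #C * ∑ k ∈ range (τ + 1), (n.choose k : ℝ) / 2 ^ k * Δ_[1] ^[k] P.eval 0 := by
  simp_rw [P.eval_natCast_eq_sum_choose_mul_fwdDiff_iter (Nat.lt_succ_of_le hP)]
  rw [sum_comm, mul_sum]
  refine sum_congr rfl fun k hk => ?_
  have hcount := congrArg (Nat.cast : ℕ → ℝ)
    ((h.of_le hτ (mem_range_succ_iff.1 hk)).sum_choose_hammingDist_mul_pow y)
  push_cast at hcount
  rw [← sum_mul, eq_div_iff (by positivity) |>.2 hcount]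
  ring

theorem IsOA.sum_lpPoly_inn (h : IsOA n 4 C) (hn : 4 ≤ n) (y : Fin n → ZMod 2) (ρ a : ℝ) :
    ∑ x ∈ C, lpPoly n ρ a (inn n x y)
      = #C * ((n ^ 2 * a ^ 2 - 2 * n * (n - 2) * a + 3 * n - 2
          - ρ * (n ^ 2 * (n - 2) * a ^ 2 - 2 * n ^ 2 * a + n * (n - 2))) / n ^ 3) := by
  obtain ⟨P, hP⟩ : ∃ P : ℝ[X], P = (2 - Polynomial.C (2 / (n : ℝ)) * X - Polynomial.C (2 / (n : ℝ)))
      * (1 - Polynomial.C (2 / (n : ℝ)) * X - Polynomial.C ρ)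
      * (1 - Polynomial.C (2 / (n : ℝ)) * X - Polynomial.C a) ^ 2 := ⟨_, rfl⟩
  have hPdeg : P.natDegree ≤ 4 := by rw [hP]; compute_degree
  have hPinn : ∀ x, lpPoly n ρ a (inn n x y) = P.eval (hammingDist x y : ℝ) := by
    intro x
    simp only [lpPoly, hP, inn, eval_mul, eval_sub, eval_pow, eval_C, eval_X, eval_ofNat,
      eval_one]
    ring
  simp_rw [hPinn]
  rw [h.sum_eval_hammingDist hn P hPdeg]
  congr 1
  simp only [sum_range_succ, sum_range_zero, fwdDiff_iter_eq_sum_shift, hP, eval_mul, eval_sub,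
    eval_pow, eval_C, eval_X, eval_one, eval_ofNat, Nat.cast_choose_eq_descPochhammer_div,
    descPochhammer_succ_right, descPochhammer_zero, eval_natCast, zsmul_eq_mul, nsmul_eq_mul,
    Nat.factorial, Int.cast_mul, Int.cast_pow, Int.cast_neg, Int.cast_one, Int.cast_natCast]
  push_cast
  field_simp
  ring

end OrthogonalArray

section CoveringRadius

variable {n : ℕ}

theorem inn_add_one_left (hn : n ≠ 0) (y : Fin n → ZMod 2) :
    inn n (fun i => y i + 1) y = -1 := by
  have hd : hammingDist (fun i => y i + 1) y = n := by
    simpa using (hammingDist_eq_card_iff (x := fun i => y i + 1) (y := y)).2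
      fun i => (ZMod.two_ne_iff_eq_add_one _ _).2 rfl
  rw [inn, hd]
  field_simp
  ring

theorem neg_one_add_two_div_le_inn {x y : Fin n → ZMod 2} (hxy : x ≠ fun i => y i + 1) :
    -1 + 2 / n ≤ inn n x y := by
  have hd : hammingDist x y + 1 ≤ n := by
    refine lt_of_le_of_ne (by simpa using hammingDist_le_card_fintype (x := x) (y := y))
      fun hd => hxy (funext fun i => (ZMod.two_ne_iff_eq_add_one _ _).1 ?_)
    exact (hammingDist_eq_card_iff (x := x) (y := y)).1 (by simpa using hd) i
  have hn : (0 : ℝ) < n := by exact_mod_cast (show 0 < n by omega)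
  have hd' : (hammingDist x y : ℝ) + 1 ≤ n := by exact_mod_cast hd
  rw [inn, ← sub_nonneg]
  field_simp
  linarith

theorem sum_lpPoly_inn_le (hn : n ≠ 0) {C : Finset (Fin n → ZMod 2)} {y : Fin n → ZMod 2}
    (hy : (fun i => y i + 1) ∈ C) {ρ : ℝ} (hρ : ∀ x ∈ C, inn n x y ≤ ρ) (a : ℝ) :
    ∑ x ∈ C, lpPoly n ρ a (inn n x y) ≤ 2 / n * (1 + ρ) * (1 + a) ^ 2 := by
  rw [← add_sum_erase C _ hy, inn_add_one_left hn]
  have hrest : ∑ x ∈ C.erase (fun i => y i + 1), lpPoly n ρ a (inn n x y) ≤ 0 := by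
    refine sum_nonpos fun x hx => mul_nonpos_of_nonpos_of_nonneg ?_ (sq_nonneg _)
    refine mul_nonpos_of_nonneg_of_nonpos ?_ (sub_nonpos.2 (hρ x (mem_of_mem_erase hx)))
    linarith [neg_one_add_two_div_le_inn (ne_of_mem_erase hx)]
  have hantipode : lpPoly n ρ a (-1) = 2 / n * (1 + ρ) * (1 + a) ^ 2 := by
    rw [lpPoly]
    ring
  linarith

end CoveringRadius

/-- Case `t_1(y) = -1`: parametric LP bound for the covering radius of
strength-4 orthogonal arrays. -/
theorem covering_radius_strength4_antipodal_bound (n : ℕ) (hn : 4 ≤ n)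
    (C : Finset (Fin n → ZMod 2)) (hC : C.Nonempty) (hOA : IsOA n 4 C)
    (hant : ∀ y : Fin n → ZMod 2,
      (C.sup' hC fun x => inn n x y) = covRad n C hC → (fun i => y i + 1) ∈ C)
    (a : ℝ)
    (hden : 0 < (n : ℝ) * (C.card : ℝ) * ((n : ℝ) * ((n : ℝ) - 2) * a ^ 2
        - 2 * (n : ℝ) * a + (n : ℝ) - 2) + 2 * (n : ℝ) ^ 2 * (1 + a) ^ 2) :
    ((C.card : ℝ) * ((n : ℝ) ^ 2 * a ^ 2 - 2 * (n : ℝ) * ((n : ℝ) - 2) * a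
          + 3 * (n : ℝ) - 2) - 2 * (n : ℝ) ^ 2 * (1 + a) ^ 2)
        / ((n : ℝ) * (C.card : ℝ) * ((n : ℝ) * ((n : ℝ) - 2) * a ^ 2
          - 2 * (n : ℝ) * a + (n : ℝ) - 2) + 2 * (n : ℝ) ^ 2 * (1 + a) ^ 2)
      ≤ covRad n C hC := by
  obtain ⟨y, -, hy⟩ := exists_mem_eq_inf' univ_nonempty fun y => C.sup' hC fun x => inn n x y
  have hρ : ∀ x ∈ C, inn n x y ≤ covRad n C hC := fun x hx => by
    rw [covRad, hy]
    exact le_sup' (fun x => inn n x y) hx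
  have hupper := sum_lpPoly_inn_le (by omega) (hant y hy.symm) hρ a
  rw [hOA.sum_lpPoly_inn hn y] at hupper
  rw [div_le_iff₀ hden]
  field_simp at hupper
  linear_combination hupper
end

section
/- For n = 5, the function q_2(a) = (175a^2 - 290a + 79)/(5(125a^2 - 70a + 29)) attains its maximum value 3/5 at a = -1/5. -/
/-- For `n = 5`, the function `q₂(a) = (175a² - 290a + 79)/(5(125a² - 70a + 29))`
attains its maximum value `3/5` at `a = -1/5`. -/
theorem q2_max_at_minus_one_fifth :
    (∀ a : ℝ, (175 * a ^ 2 - 290 * a + 79) / (5 * (125 * a ^ 2 - 70 * a + 29)) ≤ 3 / 5) ∧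
      (175 * (-1 / 5 : ℝ) ^ 2 - 290 * (-1 / 5) + 79)
          / (5 * (125 * (-1 / 5 : ℝ) ^ 2 - 70 * (-1 / 5) + 29)) = 3 / 5 := by
  constructor
  · intro a
    have hd : (0:ℝ) < 5 * (125 * a ^ 2 - 70 * a + 29) := by nlinarith [sq_nonneg (25*a - 7)]
    rw [div_le_div_iff₀ hd (by norm_num : (0:ℝ) < 5)]
    nlinarith [sq_nonneg (5*a + 1)]
  · norm_num
end

section
/- Let n \ge 2 and \ell \in (-1, 0) with \ell < -1/n. Then the largest root t_{1,1}^{0,\ell} = -1/(n\ell) of Q_1^{0,\ell}(t) = (1 + n\ell t)/(1+n\ell) satisfies -1/(n\ell) > 1/n; consequently, for any binary orthogonal array C of strength 2 for which some covering-radius-attaining point y has t_1(y) \ge \ell, one has \rho(C) \ge -1/(n\ell) > 1/n. -/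
open Finset

namespace IsOA

variable {n : ℕ} {C : Finset (Fin n → ZMod 2)}

theorem card_filter_eq_and_eq (hOA : IsOA n 2 C) {i j : Fin n} (hij : i ≠ j) (a b : ZMod 2) :
    #{x ∈ C | x i = a ∧ x j = b} * 4 = #C := by
  have h := hOA {i, j} (card_pair hij) (Function.update (fun _ => a) j b)
  simpa [Function.update_of_ne hij] using h

theorem card_filter_eq (hOA : IsOA n 2 C) (hn : 2 ≤ n) (i : Fin n) (a : ZMod 2) :
    #{x ∈ C | x i = a} * 2 = #C := by
  obtain ⟨j, hji⟩ := Fintype.exists_ne_of_one_lt_card (by simp; omega) i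
  have hsplit := card_filter_add_card_filter_not (s := {x ∈ C | x i = a}) (fun x => x j = 0)
  have hnot : ∀ c : ZMod 2, c ≠ 0 ↔ c = 1 := by decide
  simp only [filter_filter, hnot] at hsplit
  have h0 := card_filter_eq_and_eq hOA hji.symm a 0
  have h1 := card_filter_eq_and_eq hOA hji.symm a 1
  omega

theorem card_filter_ne (hOA : IsOA n 2 C) (hn : 2 ≤ n) (y : Fin n → ZMod 2) (i : Fin n) :
    #{x ∈ C | x i ≠ y i} * 2 = #C := by
  have hne : ∀ a b : ZMod 2, a ≠ b ↔ a = b + 1 := by decide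
  simpa only [hne] using card_filter_eq hOA hn i (y i + 1)

theorem card_filter_ne_and_ne (hOA : IsOA n 2 C) (hn : 2 ≤ n) (y : Fin n → ZMod 2) (i j : Fin n) :
    #{x ∈ C | x i ≠ y i ∧ x j ≠ y j} * 4 = #C + if i = j then #C else 0 := by
  split_ifs with hij
  · subst hij
    simp only [and_self]
    have := card_filter_ne hOA hn y i
    omega
  · have hne : ∀ a b : ZMod 2, a ≠ b ↔ a = b + 1 := by decide
    simpa only [hne, add_zero] using card_filter_eq_and_eq hOA hij (y i + 1) (y j + 1)

theorem sum_hammingDist_s19 (hOA : IsOA n 2 C) (hn : 2 ≤ n) (y : Fin n → ZMod 2) :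
    (∑ x ∈ C, hammingDist x y) * 2 = n * #C := by
  have hswap : ∑ x ∈ C, hammingDist x y = ∑ i, #{x ∈ C | x i ≠ y i} := by
    simp only [hammingDist, card_filter]
    exact sum_comm
  rw [hswap, sum_mul, sum_congr rfl fun i _ => card_filter_ne hOA hn y i]
  simp

theorem sum_hammingDist_sq_s19 (hOA : IsOA n 2 C) (hn : 2 ≤ n) (y : Fin n → ZMod 2) :
    (∑ x ∈ C, hammingDist x y ^ 2) * 4 = n * (n + 1) * #C := by
  have hswap : ∑ x ∈ C, hammingDist x y ^ 2 =
      ∑ i, ∑ j, #{x ∈ C | x i ≠ y i ∧ x j ≠ y j} := by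
    simp only [hammingDist, card_filter, sq, sum_mul_sum, ite_zero_mul_ite_zero, mul_one]
    rw [sum_comm]
    exact sum_congr rfl fun i _ => sum_comm
  rw [hswap, sum_mul]
  simp_rw [sum_mul, card_filter_ne_and_ne hOA hn y, sum_add_distrib, sum_ite_eq, sum_const]
  simp only [card_univ, Fintype.card_fin, smul_eq_mul, mem_univ, ↓reduceIte, sum_const]
  ring

theorem sum_inn (hOA : IsOA n 2 C) (hn : 2 ≤ n) (y : Fin n → ZMod 2) :
    ∑ x ∈ C, inn n x y = 0 := by
  have hd : ∑ x ∈ C, (hammingDist x y : ℝ) = n * #C / 2 := by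
    rw [eq_div_iff two_ne_zero]
    exact_mod_cast sum_hammingDist_s19 hOA hn y
  have hn0 : (n : ℝ) ≠ 0 := by positivity
  simp only [inn, sum_sub_distrib, ← sum_div, ← mul_sum, hd, sum_const, nsmul_eq_mul]
  field_simp
  ring

theorem sum_inn_sq (hOA : IsOA n 2 C) (hn : 2 ≤ n) (y : Fin n → ZMod 2) :
    ∑ x ∈ C, inn n x y ^ 2 = #C / n := by
  have hd2 : ∑ x ∈ C, (hammingDist x y : ℝ) ^ 2 = n * (n + 1) * #C / 4 := by
    rw [eq_div_iff four_ne_zero]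
    exact_mod_cast sum_hammingDist_sq_s19 hOA hn y
  have hn0 : (n : ℝ) ≠ 0 := by positivity
  have hexpand : ∀ x,
      inn n x y ^ 2 = 2 * inn n x y - 1 + 4 / n ^ 2 * (hammingDist x y : ℝ) ^ 2 := by
    intro x
    simp only [inn]
    ring
  simp only [hexpand, sum_add_distrib, sum_sub_distrib, ← mul_sum, sum_inn hOA hn y, hd2,
    sum_const, nsmul_eq_mul]
  field_simp
  ring

theorem sum_quadratic (hOA : IsOA n 2 C) (hn : 2 ≤ n) (y : Fin n → ZMod 2) (a b c : ℝ) :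
    ∑ x ∈ C, (a + b * inn n x y + c * inn n x y ^ 2) = (a + c / n) * #C := by
  simp only [sum_add_distrib, ← mul_sum, sum_inn hOA hn y, sum_inn_sq hOA hn y, sum_const,
    nsmul_eq_mul]
  ring

theorem one_div_add_mul_nonpos (hOA : IsOA n 2 C) (hn : 2 ≤ n) (hne : C.Nonempty)
    {y : Fin n → ZMod 2} {a b : ℝ} (hab : ∀ x ∈ C, inn n x y ∈ Set.Icc a b) :
    1 / n + a * b ≤ 0 := by
  have hsum := sum_quadratic hOA hn y (a * b) (-(a + b)) 1
  have hterm : ∀ x ∈ C, a * b + -(a + b) * inn n x y + 1 * inn n x y ^ 2 ≤ 0 := by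
    intro x hx
    obtain ⟨hax, hxb⟩ := hab x hx
    nlinarith
  have hcard : (0 : ℝ) < #C := by exact_mod_cast hne.card_pos
  nlinarith [sum_nonpos hterm]

end IsOA

theorem strength2_improved_bound_general (n : ℕ) (hn : 2 ≤ n) (ℓ : ℝ)
    (hℓ1 : -1 < ℓ) (hℓ0 : ℓ < 0) :
    (1 / (n : ℝ) < -1 / ((n : ℝ) * ℓ)) ∧
      ∀ C : Finset (Fin n → ZMod 2), ∀ hC : C.Nonempty, IsOA n 2 C →
        (∃ y : Fin n → ZMod 2,
          (C.sup' hC fun x => inn n x y) = covRad n C hC ∧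
            ℓ ≤ C.inf' hC fun x => inn n x y) →
        -1 / ((n : ℝ) * ℓ) ≤ covRad n C hC := by
  have hn0 : (0 : ℝ) < n := by positivity
  have hnℓ : (n : ℝ) * ℓ < 0 := mul_neg_of_pos_of_neg hn0 hℓ0
  refine ⟨?_, fun C hC hOA ⟨y, hρ, hℓy⟩ => ?_⟩
  · rw [lt_div_iff_of_neg hnℓ]
    field_simp
    linarith
  · have hIcc : ∀ x ∈ C, inn n x y ∈ Set.Icc ℓ (covRad n C hC) := fun x hx =>
      ⟨hℓy.trans (inf'_le _ hx), hρ ▸ le_sup' (fun x => inn n x y) hx⟩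
    have hkey := hOA.one_div_add_mul_nonpos hn hC hIcc
    rw [div_le_iff_of_neg hnℓ]
    field_simp at hkey
    linarith

/-- For `ℓ ∈ (-1, 0)` with `ℓ < -1/n`, the largest root `-1/(nℓ)` of `Q₁^{0,ℓ}`
exceeds `1/n`, and any strength-2 orthogonal array having a covering-radius
attaining point `y` with `t₁(y) ≥ ℓ` has covering radius at least `-1/(nℓ)`. -/
theorem strength2_improved_bound (n : ℕ) (hn : 2 ≤ n) (ℓ : ℝ)
    (hℓ1 : -1 < ℓ) (hℓ0 : ℓ < 0) (hℓn : ℓ < -1 / (n : ℝ)) :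
    (1 / (n : ℝ) < -1 / ((n : ℝ) * ℓ)) ∧
      ∀ C : Finset (Fin n → ZMod 2), ∀ hC : C.Nonempty, IsOA n 2 C →
        (∃ y : Fin n → ZMod 2,
          (C.sup' hC fun x => inn n x y) = covRad n C hC ∧
            ℓ ≤ C.inf' hC fun x => inn n x y) →
        -1 / ((n : ℝ) * ℓ) ≤ covRad n C hC :=
  strength2_improved_bound_general n hn ℓ hℓ1 hℓ0
end
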